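/- arXiv:1904.02265 — 4 statements merged into one kernel-verified Lean document; each statement's English description precedes it below -/
import Mathlib

section
/- For every alternating sign matrix B = (b_{ij}) of size n, the number β(B) of join-irreducible alternating sign matrices A with A ≤ B in ASM order equals the weighted sum of inversions of B: β(B) = Σ_{i<j, k<l} (l−k)·b_{jk}·b_{il}. -/
/-- An alternating sign matrix: entries in {-1,0,1}, partial row/column sums in {0,1},
full row/column sums equal to 1. -/
def IsASM {n : ℕ} (A : Matrix (Fin n) (Fin n) ℤ) : Prop :=
  (∀ i j, A i j = -1 ∨ A i j = 0 ∨ A i j = 1) ∧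
  (∀ i j, (∑ k ∈ Finset.Iic j, A i k) = 0 ∨ (∑ k ∈ Finset.Iic j, A i k) = 1) ∧
  (∀ i j, (∑ k ∈ Finset.Iic i, A k j) = 0 ∨ (∑ k ∈ Finset.Iic i, A k j) = 1) ∧
  (∀ i, (∑ k, A i k) = 1) ∧
  (∀ j, (∑ k, A k j) = 1)

/-- Corner sum matrix. -/
def cornerSum {n : ℕ} (A : Matrix (Fin n) (Fin n) ℤ) (i j : Fin n) : ℤ :=
  ∑ p ∈ Finset.Iic i, ∑ q ∈ Finset.Iic j, A p q

/-- ASM order: `A ≤ B` iff corner sums of `A` dominate those of `B`. -/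
def asmLE {n : ℕ} (A B : Matrix (Fin n) (Fin n) ℤ) : Prop :=
  ∀ i j, cornerSum B i j ≤ cornerSum A i j

def asmLT {n : ℕ} (A B : Matrix (Fin n) (Fin n) ℤ) : Prop :=
  asmLE A B ∧ ¬ asmLE B A

/-- `B` covers `A` in the poset of ASMs of size `n`. -/
def asmCovers {n : ℕ} (A B : Matrix (Fin n) (Fin n) ℤ) : Prop :=
  asmLT A B ∧ ∀ C : Matrix (Fin n) (Fin n) ℤ, IsASM C → asmLT A C → ¬ asmLT C B

/-- `A` is join-irreducible: it covers exactly one element of the ASM poset. -/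
def JoinIrred {n : ℕ} (A : Matrix (Fin n) (Fin n) ℤ) : Prop :=
  IsASM A ∧ ∃! C : Matrix (Fin n) (Fin n) ℤ, IsASM C ∧ asmCovers C A

/-- `β B` = number of join-irreducible ASMs weakly below `B`. -/
noncomputable def asmBeta {n : ℕ} (B : Matrix (Fin n) (Fin n) ℤ) : ℕ :=
  Set.ncard {A : Matrix (Fin n) (Fin n) ℤ | JoinIrred A ∧ asmLE A B}

/-!
An ASM `A` is determined by its corner-sum function `r(a, b)` (the sum of the entries in rows
`< a` and columns `< b`), and these are exactly the functions on `[0, n]²` with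
`r(0, b) = r(a, 0) = 0`, `r(n, b) = b`, `r(a, n) = a` and steps in `{0, 1}` in both directions;
`A ≤ B` iff `r_A ≥ r_B` pointwise. The ASMs covered by `A` are obtained by raising `r_A` by one
at a single interior point, so `A` is join-irreducible iff there is exactly one such point
`(a, b)`; then `r_A` is the largest corner function with value `s = r_A(a, b)` there, namely
`min(p, q, s + (p - a)⁺ + (q - b)⁺)`. This join-irreducible lies below `B` iff `r_B(a, b) ≤ s`,
so `β(B) = ∑_{a,b} (min(a, b) - r_B(a, b))`. In column `b` this sum is the area between the lattice
path of the `0/1` word `(∑_{q < b} B_{iq})_i` and the path with all its ones first, i.e. the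
number of inversions of that word; summing over `b` and regrouping by the entries of `B` gives the
weighted inversion number.
-/

open Finset

lemma Fin.sum_Iic_eq_sum_range {M : Type*} [AddCommMonoid M] {n : ℕ} (f : ℕ → M) (j : Fin n) :
    ∑ k ∈ Iic j, f k = ∑ q ∈ range (j + 1), f q := by
  rw [Nat.range_succ_eq_Iic, ← Fin.map_valEmbedding_Iic, sum_map]
  rfl

lemma Fin.sum_sum_ite_lt {M : Type*} [AddCommMonoid M] {n : ℕ} (f : ℕ → ℕ → M) :
    ∑ i : Fin n, ∑ j : Fin n, (if i < j then f i j else 0) =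
      ∑ j ∈ range n, ∑ i ∈ range j, f i j := by
  rw [sum_comm, ← Fin.sum_univ_eq_sum_range (fun j => ∑ i ∈ range j, f i j)]
  refine sum_congr rfl fun j _ => ?_
  simp only [Fin.lt_def]
  rw [Fin.sum_univ_eq_sum_range (fun i => if i < (j : ℕ) then f i j else 0), ← sum_filter]
  congr 1
  ext i
  simp only [mem_filter, mem_range]
  omega

lemma sum_range_partialSums {R : Type*} [CommRing R] (f : ℕ → R) (n : ℕ) :
    ∑ b ∈ range (n + 1), ∑ k ∈ range b, f k = ∑ k ∈ range n, ((n : R) - k) * f k := by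
  induction n with
  | zero => simp
  | succ n ih =>
    rw [sum_range_succ _ (n + 1), ih, sum_range_succ (fun k => ((↑(n + 1) : R) - k) * f k),
      sum_range_succ f n, ← add_assoc, ← sum_add_distrib]
    push_cast
    congr 1
    · exact sum_congr rfl fun k _ => by ring
    · ring

lemma sum_range_mul_sum_Ico {R : Type*} [CommRing R] (f g : ℕ → R) (n : ℕ) :
    ∑ b ∈ range (n + 1), (∑ k ∈ range b, f k) * ∑ l ∈ Ico b n, g l =
      ∑ l ∈ range n, ∑ k ∈ range l, ((l : R) - k) * f k * g l := by
  induction n with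
  | zero => simp
  | succ n ih =>
    rw [sum_range_succ _ (n + 1), Ico_self, sum_empty, mul_zero, add_zero,
      sum_congr rfl fun b hb => by
        rw [sum_Ico_succ_top (Nat.lt_succ_iff.1 (mem_range.1 hb)), mul_add],
      sum_add_distrib, ih, ← sum_mul, sum_range_partialSums, sum_range_succ _ n, sum_mul]

lemma sum_range_min_add_one_sub_min {K : ℤ} (hK : 0 ≤ K) (N : ℕ) :
    ∑ a ∈ range (N + 1), (min (a : ℤ) (K + 1) - min (a : ℤ) K) = max ((N : ℤ) - K) 0 := by
  induction N with
  | zero => simp; omega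
  | succ N ih =>
    rw [sum_range_succ, ih]
    push_cast
    omega

/-- The area between the lattice path of a `0/1` word and the path with all its ones first is the
number of pairs `i < j` with `w i = 0` and `w j = 1`. -/
lemma sum_range_min_sub_partialSum (w : ℕ → ℤ) (N : ℕ)
    (hw : ∀ i < N, w i = 0 ∨ w i = 1) :
    ∑ a ∈ range (N + 1), (min (a : ℤ) (∑ i ∈ range N, w i) - ∑ i ∈ range a, w i) =
      ∑ j ∈ range N, ∑ i ∈ range j, w j * (1 - w i) := by
  induction N with
  | zero => simp
  | succ N ih =>
    have hw' : ∀ i < N, w i = 0 ∨ w i = 1 := fun i hi => hw i (by omega)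
    have hK₀ : 0 ≤ ∑ i ∈ range N, w i :=
      sum_nonneg fun i hi => by have := hw' i (mem_range.1 hi); omega
    have hKN : ∑ i ∈ range N, w i ≤ N := by
      calc ∑ i ∈ range N, w i ≤ ∑ i ∈ range N, (1 : ℤ) :=
            sum_le_sum fun i hi => by have := hw' i (mem_range.1 hi); omega
        _ = N := by simp
    have e : ∑ i ∈ range (N + 1), w i = ∑ i ∈ range N, w i + w N := sum_range_succ w N
    rw [e, sum_range_succ _ (N + 1), e,
      sum_range_succ (fun j => ∑ i ∈ range j, w j * (1 - w i)) N, ← ih hw']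
    rcases hw N (by omega) with h | h <;> simp only [h]
    · simp only [add_zero, zero_mul, sum_const_zero]
      push_cast
      omega
    · have := sum_range_min_add_one_sub_min hK₀ N
      simp only [one_mul, sum_sub_distrib, sum_const, card_range, nsmul_eq_mul, mul_one] at this ⊢
      push_cast
      omega

namespace ASM

variable {n : ℕ} {r r' : ℕ → ℕ → ℤ}

def extendByZero (A : Matrix (Fin n) (Fin n) ℤ) (p q : ℕ) : ℤ :=
  if h : p < n ∧ q < n then A ⟨p, h.1⟩ ⟨q, h.2⟩ else 0

@[simp] lemma extendByZero_val (A : Matrix (Fin n) (Fin n) ℤ) (i j : Fin n) :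
    extendByZero A i j = A i j := by
  simp [extendByZero]

def rowPartial (A : Matrix (Fin n) (Fin n) ℤ) (p b : ℕ) : ℤ :=
  ∑ q ∈ range b, extendByZero A p q

def colPartial (A : Matrix (Fin n) (Fin n) ℤ) (a q : ℕ) : ℤ :=
  ∑ p ∈ range a, extendByZero A p q

/-- The sum of the entries in rows `< a` and columns `< b`; indices are shifted by one from
`cornerSum`. -/
def cornerFn (A : Matrix (Fin n) (Fin n) ℤ) (a b : ℕ) : ℤ :=
  ∑ p ∈ range a, rowPartial A p b

def ofCornerFn (n : ℕ) (r : ℕ → ℕ → ℤ) : Matrix (Fin n) (Fin n) ℤ :=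
  fun i j => r (i + 1) (j + 1) - r i (j + 1) - r (i + 1) j + r i j

section

variable (A : Matrix (Fin n) (Fin n) ℤ)

lemma sum_Iic_eq_rowPartial (i j : Fin n) : ∑ k ∈ Iic j, A i k = rowPartial A i (j + 1) := by
  simp_rw [← extendByZero_val A i]
  exact Fin.sum_Iic_eq_sum_range (extendByZero A i) j

lemma sum_Iic_eq_colPartial (i j : Fin n) : ∑ k ∈ Iic i, A k j = colPartial A (i + 1) j := by
  simp_rw [← extendByZero_val A _ j]
  exact Fin.sum_Iic_eq_sum_range (extendByZero A · j) i

lemma sum_eq_rowPartial (i : Fin n) : ∑ k, A i k = rowPartial A i n := by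
  simp_rw [← extendByZero_val A i]
  exact Fin.sum_univ_eq_sum_range (extendByZero A i) n

lemma sum_eq_colPartial (j : Fin n) : ∑ k, A k j = colPartial A n j := by
  simp_rw [← extendByZero_val A _ j]
  exact Fin.sum_univ_eq_sum_range (extendByZero A · j) n

lemma rowPartial_succ (p b : ℕ) :
    rowPartial A p (b + 1) = rowPartial A p b + extendByZero A p b :=
  sum_range_succ _ _

@[simp] lemma cornerFn_zero_left (b : ℕ) : cornerFn A 0 b = 0 := rfl

@[simp] lemma cornerFn_zero_right (a : ℕ) : cornerFn A a 0 = 0 := by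
  simp [cornerFn, rowPartial]

lemma cornerFn_succ_left (a b : ℕ) :
    cornerFn A (a + 1) b = cornerFn A a b + rowPartial A a b :=
  sum_range_succ _ _

lemma cornerFn_succ_right (a b : ℕ) :
    cornerFn A a (b + 1) = cornerFn A a b + colPartial A a b := by
  simp [cornerFn, colPartial, rowPartial_succ, sum_add_distrib]

lemma cornerSum_eq_cornerFn (i j : Fin n) : cornerSum A i j = cornerFn A (i + 1) (j + 1) := by
  simp_rw [cornerSum, sum_Iic_eq_rowPartial]
  exact Fin.sum_Iic_eq_sum_range (rowPartial A · (j + 1)) i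

lemma ofCornerFn_cornerFn : ofCornerFn n (cornerFn A) = A := by
  ext i j
  simp only [ofCornerFn, cornerFn_succ_left, rowPartial_succ, extendByZero_val]
  ring

end

/-- The corner functions of ASMs, restricted to `[0, n] × [0, n]`. -/
structure IsCornerFn (n : ℕ) (r : ℕ → ℕ → ℤ) : Prop where
  step_left : ∀ a b, a < n → b ≤ n → r a b ≤ r (a + 1) b ∧ r (a + 1) b ≤ r a b + 1
  step_right : ∀ a b, a ≤ n → b < n → r a b ≤ r a (b + 1) ∧ r a (b + 1) ≤ r a b + 1
  zero_left : ∀ b, b ≤ n → r 0 b = 0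
  zero_right : ∀ a, a ≤ n → r a 0 = 0
  last_left : ∀ b, b ≤ n → r n b = b
  last_right : ∀ a, a ≤ n → r a n = a

namespace IsCornerFn

lemma swap (V : IsCornerFn n r) : IsCornerFn n (fun a b => r b a) :=
  ⟨fun a b ha hb => V.step_right b a hb ha, fun a b ha hb => V.step_left b a hb ha,
    V.zero_right, V.zero_left, V.last_right, V.last_left⟩

lemma mono_left (V : IsCornerFn n r) {a a' b : ℕ} (h : a ≤ a') (ha' : a' ≤ n) (hb : b ≤ n) :
    r a b ≤ r a' b ∧ r a' b ≤ r a b + ((a' : ℤ) - a) := by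
  induction a', h using Nat.le_induction with
  | base => simp
  | succ a' _ ih =>
    have := V.step_left a' b (by omega) hb
    have := ih (by omega)
    push_cast
    omega

lemma mono_right (V : IsCornerFn n r) {a b b' : ℕ} (h : b ≤ b') (hb' : b' ≤ n) (ha : a ≤ n) :
    r a b ≤ r a b' ∧ r a b' ≤ r a b + ((b' : ℤ) - b) :=
  V.swap.mono_left h hb' ha

lemma nonneg (V : IsCornerFn n r) {a b : ℕ} (ha : a ≤ n) (hb : b ≤ n) : 0 ≤ r a b := by
  simpa [V.zero_left b hb] using (V.mono_left (Nat.zero_le a) ha hb).1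

lemma le_left (V : IsCornerFn n r) {a b : ℕ} (ha : a ≤ n) (hb : b ≤ n) : r a b ≤ a := by
  simpa [V.last_right a ha] using (V.mono_right hb le_rfl ha).1

lemma le_right (V : IsCornerFn n r) {a b : ℕ} (ha : a ≤ n) (hb : b ≤ n) : r a b ≤ b := by
  simpa [V.last_left b hb] using (V.mono_left ha le_rfl hb).1

lemma add_sub_le (V : IsCornerFn n r) {a b : ℕ} (ha : a ≤ n) (hb : b ≤ n) :
    (a : ℤ) + b - n ≤ r a b := by
  have := (V.mono_left ha le_rfl hb).2
  rw [V.last_left b hb] at this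
  omega

end IsCornerFn

variable {A B C : Matrix (Fin n) (Fin n) ℤ}

lemma ofCornerFn_congr (h : ∀ a b, a ≤ n → b ≤ n → r a b = r' a b) :
    ofCornerFn n r = ofCornerFn n r' := by
  ext i j
  have := i.isLt
  have := j.isLt
  simp only [ofCornerFn]
  rw [h (i + 1) (j + 1) (by omega) (by omega), h i (j + 1) (by omega) (by omega),
    h (i + 1) j (by omega) (by omega), h i j (by omega) (by omega)]

lemma cornerFn_ofCornerFn (h₁ : ∀ b, b ≤ n → r 0 b = 0) (h₂ : ∀ a, a ≤ n → r a 0 = 0)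
    {a b : ℕ} (ha : a ≤ n) (hb : b ≤ n) : cornerFn (ofCornerFn n r) a b = r a b := by
  have row : ∀ p < n, rowPartial (ofCornerFn n r) p b = r (p + 1) b - r p b := by
    intro p hp
    calc rowPartial (ofCornerFn n r) p b
        = ∑ q ∈ range b, ((r (p + 1) (q + 1) - r p (q + 1)) - (r (p + 1) q - r p q)) := by
          refine sum_congr rfl fun q hq => ?_
          simp [extendByZero, ofCornerFn, hp, (mem_range.1 hq).trans_le hb]
          ring
      _ = r (p + 1) b - r p b := by
          rw [sum_range_sub (fun q => r (p + 1) q - r p q), h₂ _ hp, h₂ _ hp.le, sub_self,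
            sub_zero]
  calc cornerFn (ofCornerFn n r) a b = ∑ p ∈ range a, (r (p + 1) b - r p b) :=
        sum_congr rfl fun p hp => row p ((mem_range.1 hp).trans_le ha)
    _ = r a b := by rw [sum_range_sub (r · b), h₁ b hb, sub_zero]

lemma _root_.IsASM.isCornerFn (hA : IsASM A) : IsCornerFn n (cornerFn A) := by
  obtain ⟨-, hrow, hcol, hrowsum, hcolsum⟩ := hA
  refine ⟨fun a b ha hb => ?_, fun a b ha hb => ?_, fun _ _ => rfl,
    fun a _ => cornerFn_zero_right A a, fun b hb => ?_, fun a ha => ?_⟩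
  · rw [cornerFn_succ_left]
    rcases b with _ | j
    · simp [rowPartial]
    · have := hrow ⟨a, ha⟩ ⟨j, hb⟩
      simp only [sum_Iic_eq_rowPartial] at this
      omega
  · rw [cornerFn_succ_right]
    rcases a with _ | i
    · simp [colPartial]
    · have := hcol ⟨i, ha⟩ ⟨b, hb⟩
      simp only [sum_Iic_eq_colPartial] at this
      omega
  · induction b with
    | zero => simp
    | succ b ih =>
      have := hcolsum ⟨b, hb⟩
      rw [sum_eq_colPartial] at this
      rw [cornerFn_succ_right, ih (by omega), this]
      push_cast; ring
  · induction a with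
    | zero => simp
    | succ a ih =>
      have := hrowsum ⟨a, ha⟩
      rw [sum_eq_rowPartial] at this
      rw [cornerFn_succ_left, ih (by omega), this]
      push_cast; ring

lemma isASM_of_isCornerFn (V : IsCornerFn n r)
    (hA : ∀ a b, a ≤ n → b ≤ n → cornerFn A a b = r a b) : IsASM A := by
  have row : ∀ (i : Fin n) b, b ≤ n → rowPartial A i b = r (i + 1) b - r i b :=
    fun i b hb => by rw [← hA _ _ i.isLt hb, ← hA _ _ i.isLt.le hb, cornerFn_succ_left]; ring
  have col : ∀ a (j : Fin n), a ≤ n → colPartial A a j = r a (j + 1) - r a j :=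
    fun a j ha => by rw [← hA _ _ ha j.isLt, ← hA _ _ ha j.isLt.le, cornerFn_succ_right]; ring
  have row_step : ∀ (i : Fin n) b, b ≤ n → rowPartial A i b = 0 ∨ rowPartial A i b = 1 :=
    fun i b hb => by have := V.step_left i b i.isLt hb; rw [row i b hb]; omega
  refine ⟨fun i j => ?_, fun i j => ?_, fun i j => ?_, fun i => ?_, fun j => ?_⟩
  · have := row_step i j j.isLt.le
    have h := row_step i (j + 1) j.isLt
    rw [rowPartial_succ, extendByZero_val] at h
    omega
  · rw [sum_Iic_eq_rowPartial]
    exact row_step i (j + 1) j.isLt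
  · have := V.step_right (i + 1) j i.isLt j.isLt
    rw [sum_Iic_eq_colPartial, col (i + 1) j i.isLt]
    omega
  · rw [sum_eq_rowPartial, row i n le_rfl, V.last_right _ i.isLt, V.last_right _ i.isLt.le]
    push_cast; ring
  · rw [sum_eq_colPartial, col n j le_rfl, V.last_left _ j.isLt, V.last_left _ j.isLt.le]
    push_cast; ring

lemma asmLE_iff :
    asmLE A B ↔ ∀ a b, a ≤ n → b ≤ n → cornerFn B a b ≤ cornerFn A a b := by
  refine ⟨fun h a b ha hb => ?_, fun h i j => ?_⟩
  · rcases a with _ | a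
    · simp
    rcases b with _ | b
    · simp
    simpa [cornerSum_eq_cornerFn] using h ⟨a, ha⟩ ⟨b, hb⟩
  · rw [cornerSum_eq_cornerFn, cornerSum_eq_cornerFn]
    exact h _ _ i.isLt j.isLt

lemma eq_ofCornerFn (h : ∀ a b, a ≤ n → b ≤ n → cornerFn A a b = r a b) :
    A = ofCornerFn n r :=
  (ofCornerFn_cornerFn A).symm.trans (ofCornerFn_congr h)

lemma IsCornerFn.cornerFn_ofCornerFn (V : IsCornerFn n r) {a b : ℕ} (ha : a ≤ n) (hb : b ≤ n) :
    cornerFn (ofCornerFn n r) a b = r a b :=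
  ASM.cornerFn_ofCornerFn V.zero_left V.zero_right ha hb

lemma IsCornerFn.isASM_ofCornerFn (V : IsCornerFn n r) : IsASM (ofCornerFn n r) :=
  isASM_of_isCornerFn V fun _ _ => V.cornerFn_ofCornerFn

def bump (r : ℕ → ℕ → ℤ) (a b p q : ℕ) : ℤ := r p q + if p = a ∧ q = b then 1 else 0

/-- `(a, b)` is an interior point at which `r` can be raised by one. Larger corner sums are lower
in ASM order, so for `r = cornerFn A` these points give the ASMs covered by `A`. -/
def CanBump (n : ℕ) (r : ℕ → ℕ → ℤ) (a b : ℕ) : Prop :=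
  0 < a ∧ a < n ∧ 0 < b ∧ b < n ∧ r (a - 1) b = r a b ∧ r a (b - 1) = r a b ∧
    r (a + 1) b = r a b + 1 ∧ r a (b + 1) = r a b + 1

lemma CanBump.congr {a b : ℕ} (h : CanBump n r a b)
    (hr : ∀ p q, p ≤ n → q ≤ n → r p q = r' p q) : CanBump n r' a b := by
  obtain ⟨ha, ha', hb, hb', h₁, h₂, h₃, h₄⟩ := h
  refine ⟨ha, ha', hb, hb', ?_, ?_, ?_, ?_⟩ <;>
    rw [← hr _ _ (by omega) (by omega), ← hr _ _ (by omega) (by omega)] <;> assumption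

lemma IsCornerFn.bump (V : IsCornerFn n r) {a b : ℕ} (h : CanBump n r a b) :
    IsCornerFn n (bump r a b) := by
  obtain ⟨ha₀, ha, hb₀, hb, h₁, h₂, h₃, h₄⟩ := h
  refine ⟨fun p q hp hq => ?_, fun p q hp hq => ?_, fun q hq => ?_, fun p hp => ?_,
    fun q hq => ?_, fun p hp => ?_⟩ <;> simp only [ASM.bump]
  · have := V.step_left p q hp hq
    grind
  · have := V.step_right p q hp hq
    grind
  · grind [V.zero_left q hq]
  · grind [V.zero_right p hp]
  · grind [V.last_left q hq]
  · grind [V.last_right p hp]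

lemma IsCornerFn.interior_of_ne (V : IsCornerFn n r) (V' : IsCornerFn n r') {p q : ℕ}
    (hp : p ≤ n) (hq : q ≤ n) (h : r p q ≠ r' p q) : 0 < p ∧ p < n ∧ 0 < q ∧ q < n := by
  refine ⟨Nat.pos_of_ne_zero ?_, lt_of_le_of_ne hp ?_, Nat.pos_of_ne_zero ?_,
    lt_of_le_of_ne hq ?_⟩ <;> rintro rfl <;> apply h
  · rw [V.zero_left q hq, V'.zero_left q hq]
  · rw [V.last_left q hq, V'.last_left q hq]
  · rw [V.zero_right p hp, V'.zero_right p hp]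
  · rw [V.last_right p hp, V'.last_right p hp]

/-- A point of `{r < r'}` minimising the potential `2 r(p, q) - p - q` can be bumped: a neighbour
violating one of the bump conditions would lie in `{r < r'}` with smaller potential. -/
lemma IsCornerFn.exists_canBump (V : IsCornerFn n r) (V' : IsCornerFn n r')
    (hlt : ∃ p q, p ≤ n ∧ q ≤ n ∧ r p q < r' p q) :
    ∃ a b, a ≤ n ∧ b ≤ n ∧ r a b < r' a b ∧ CanBump n r a b := by
  classical
  let D := (range (n + 1) ×ˢ range (n + 1)).filter fun x => r x.1 x.2 < r' x.1 x.2
  have mem_D : ∀ p q, (p, q) ∈ D ↔ p ≤ n ∧ q ≤ n ∧ r p q < r' p q := by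
    simp [D, and_assoc]
  obtain ⟨p₀, q₀, hp₀, hq₀, h₀⟩ := hlt
  obtain ⟨⟨a, b⟩, hab, hmin⟩ := D.exists_min_image (fun x => 2 * r x.1 x.2 - x.1 - x.2)
    ⟨_, (mem_D p₀ q₀).2 ⟨hp₀, hq₀, h₀⟩⟩
  obtain ⟨ha, hb, hlt⟩ := (mem_D a b).1 hab
  have key : ∀ p q, p ≤ n → q ≤ n → r p q < r' p q →
      2 * r a b - a - b ≤ 2 * r p q - p - q :=
    fun p q hp hq h => hmin (p, q) ((mem_D p q).2 ⟨hp, hq, h⟩)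
  obtain ⟨ha₀, ha', hb₀, hb'⟩ := V.interior_of_ne V' ha hb hlt.ne
  obtain ⟨a, rfl⟩ : ∃ a', a = a' + 1 := ⟨a - 1, by omega⟩
  obtain ⟨b, rfl⟩ : ∃ b', b = b' + 1 := ⟨b - 1, by omega⟩
  refine ⟨a + 1, b + 1, ha, hb, hlt, ha₀, ha', hb₀, hb', ?_, ?_, ?_, ?_⟩ <;> by_contra hne
  · simp only [Nat.add_sub_cancel] at hne
    have := V.step_left a (b + 1) (by omega) hb
    have := V'.step_left a (b + 1) (by omega) hb
    have := key a (b + 1) (by omega) hb (by omega)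
    push_cast at this
    omega
  · simp only [Nat.add_sub_cancel] at hne
    have := V.step_right (a + 1) b ha (by omega)
    have := V'.step_right (a + 1) b ha (by omega)
    have := key (a + 1) b ha (by omega) (by omega)
    push_cast at this
    omega
  · have := V.step_left (a + 1) (b + 1) ha' hb
    have := V'.step_left (a + 1) (b + 1) ha' hb
    have := key (a + 1 + 1) (b + 1) ha' hb (by omega)
    push_cast at this
    omega
  · have := V.step_right (a + 1) (b + 1) ha hb'
    have := V'.step_right (a + 1) (b + 1) ha hb'
    have := key (a + 1) (b + 1 + 1) ha hb' (by omega)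
    push_cast at this
    omega

/-- The largest corner function with value `s` at `(a, b)`. -/
def irredFn (a b : ℕ) (s : ℤ) (p q : ℕ) : ℤ :=
  min (min (p : ℤ) q) (s + max ((p : ℤ) - a) 0 + max ((q : ℤ) - b) 0)

def Admissible (n a b : ℕ) (s : ℤ) : Prop :=
  max 0 ((a : ℤ) + b - n) ≤ s ∧ s < min (a : ℤ) b

section irredFn

variable {a b : ℕ} {s : ℤ}

lemma Admissible.lt (h : Admissible n a b s) : 0 < a ∧ a < n ∧ 0 < b ∧ b < n := by
  obtain ⟨h₁, h₂⟩ := h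
  omega

lemma isCornerFn_irredFn (h : Admissible n a b s) : IsCornerFn n (irredFn a b s) := by
  obtain ⟨h₁, h₂⟩ := h
  constructor <;> intros <;> simp only [irredFn] <;> push_cast <;> omega

lemma irredFn_self (h : Admissible n a b s) : irredFn a b s a b = s := by
  obtain ⟨h₁, h₂⟩ := h
  simp only [irredFn]
  omega

lemma canBump_irredFn_iff (h : Admissible n a b s) {p q : ℕ} :
    CanBump n (irredFn a b s) p q ↔ p = a ∧ q = b := by
  obtain ⟨h₁, h₂⟩ := h
  constructor
  · rintro ⟨hp, -, hq, -, e₁, e₂, e₃, e₄⟩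
    simp only [irredFn] at e₁ e₂ e₃ e₄
    push_cast [Nat.cast_sub hp, Nat.cast_sub hq] at e₁ e₂ e₃ e₄
    omega
  · rintro ⟨rfl, rfl⟩
    refine ⟨by omega, by omega, by omega, by omega, ?_⟩
    simp only [irredFn]
    push_cast [Nat.cast_sub (show 1 ≤ p by omega), Nat.cast_sub (show 1 ≤ q by omega)]
    omega

lemma IsCornerFn.le_irredFn (V : IsCornerFn n r) (ha : a ≤ n) (hb : b ≤ n) (hs : r a b ≤ s)
    {p q : ℕ} (hp : p ≤ n) (hq : q ≤ n) : r p q ≤ irredFn a b s p q := by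
  have h₁ := (V.mono_left (le_max_right a p) (max_le ha hp) hq).1
  have h₂ := (V.mono_right (le_max_right b q) (max_le hb hq) (max_le ha hp)).1
  have h₃ := (V.mono_left (le_max_left a p) (max_le ha hp) (max_le hb hq)).2
  have h₄ := (V.mono_right (le_max_left b q) (max_le hb hq) ha).2
  have := V.le_left hp hq
  have := V.le_right hp hq
  simp only [irredFn]
  push_cast at h₃ h₄
  omega

lemma IsCornerFn.admissible (V : IsCornerFn n r) (h : CanBump n r a b) :
    Admissible n a b (r a b) := by
  obtain ⟨ha₀, ha, hb₀, hb, h₁, h₂, -, -⟩ := h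
  have := V.le_left (a := a - 1) (b := b) (by omega) (by omega)
  have := V.le_right (a := a) (b := b - 1) (by omega) (by omega)
  have := V.nonneg (a := a) (b := b) (by omega) (by omega)
  have := V.add_sub_le (a := a) (b := b) (by omega) (by omega)
  refine ⟨by omega, ?_⟩
  push_cast [Nat.cast_sub ha₀, Nat.cast_sub hb₀] at *
  omega

end irredFn

lemma covers_ofCornerFn_bump (hA : IsASM A) {a b : ℕ} (h : CanBump n (cornerFn A) a b) :
    IsASM (ofCornerFn n (bump (cornerFn A) a b)) ∧
      asmCovers (ofCornerFn n (bump (cornerFn A) a b)) A := by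
  have W := hA.isCornerFn.bump h
  obtain ⟨-, ha, -, hb, -⟩ := h
  refine ⟨W.isASM_ofCornerFn, ⟨?_, ?_⟩, fun E _ hCE hEA => ?_⟩
  · rw [asmLE_iff]
    intro p q hp hq
    rw [W.cornerFn_ofCornerFn hp hq, bump]
    split_ifs <;> omega
  · rw [asmLE_iff]
    intro hle
    have := hle a b ha.le hb.le
    rw [W.cornerFn_ofCornerFn ha.le hb.le, bump, if_pos ⟨rfl, rfl⟩] at this
    omega
  · obtain ⟨hCE, hEC⟩ := hCE
    obtain ⟨hEA, hAE⟩ := hEA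
    rw [asmLE_iff] at hCE hEC hEA hAE
    have key : ∀ p q, p ≤ n → q ≤ n →
        cornerFn A p q ≤ cornerFn E p q ∧ cornerFn E p q ≤ bump (cornerFn A) a b p q :=
      fun p q hp hq => ⟨hEA p q hp hq, W.cornerFn_ofCornerFn hp hq ▸ hCE p q hp hq⟩
    by_cases hab : cornerFn E a b = cornerFn A a b
    · refine hAE fun p q hp hq => ?_
      have := key p q hp hq
      simp only [bump] at this
      split_ifs at this with e
      · obtain ⟨rfl, rfl⟩ := e; omega
      · omega
    · refine hEC fun p q hp hq => ?_
      have := key p q hp hq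
      rw [W.cornerFn_ofCornerFn hp hq]
      simp only [bump] at this ⊢
      split_ifs at this ⊢ with e
      · obtain ⟨rfl, rfl⟩ := e; omega
      · omega

lemma exists_canBump_of_covers (hA : IsASM A) (hC : IsASM C) (hcov : asmCovers C A) :
    ∃ a b, CanBump n (cornerFn A) a b ∧ C = ofCornerFn n (bump (cornerFn A) a b) := by
  obtain ⟨⟨hCA, hAC⟩, hmin⟩ := hcov
  rw [asmLE_iff] at hCA hAC
  push Not at hAC
  obtain ⟨a, b, ha, hb, hlt, hab⟩ := hA.isCornerFn.exists_canBump hC.isCornerFn hAC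
  have W := hA.isCornerFn.bump hab
  have hE := covers_ofCornerFn_bump hA hab
  have hCE : asmLE C (ofCornerFn n (bump (cornerFn A) a b)) := by
    rw [asmLE_iff]
    intro p q hp hq
    have := hCA p q hp hq
    rw [W.cornerFn_ofCornerFn hp hq, bump]
    split_ifs with e
    · obtain ⟨rfl, rfl⟩ := e; omega
    · omega
  have hEC : asmLE (ofCornerFn n (bump (cornerFn A) a b)) C := by
    by_contra h
    exact hmin _ hE.1 ⟨hCE, h⟩ hE.2.1
  refine ⟨a, b, hab, eq_ofCornerFn fun p q hp hq => ?_⟩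
  rw [asmLE_iff] at hCE hEC
  exact le_antisymm (W.cornerFn_ofCornerFn hp hq ▸ hEC p q hp hq)
    (W.cornerFn_ofCornerFn hp hq ▸ hCE p q hp hq)

lemma IsCornerFn.eq_of_ofCornerFn_bump_eq (V : IsCornerFn n r) {a b p q : ℕ}
    (hab : CanBump n r a b) (hpq : CanBump n r p q)
    (h : ofCornerFn n (ASM.bump r a b) = ofCornerFn n (ASM.bump r p q)) : (a, b) = (p, q) := by
  have := congrArg (cornerFn · a b) h
  obtain ⟨-, ha, -, hb, -⟩ := id hab
  simp only [(V.bump hab).cornerFn_ofCornerFn ha.le hb.le,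
    (V.bump hpq).cornerFn_ofCornerFn ha.le hb.le, ASM.bump] at this
  simpa [eq_comm] using this

lemma joinIrred_iff_existsUnique_canBump (hA : IsASM A) :
    JoinIrred A ↔ ∃! x : ℕ × ℕ, CanBump n (cornerFn A) x.1 x.2 := by
  refine ⟨fun ⟨_, C, ⟨hC, hcov⟩, huniq⟩ => ?_, fun ⟨⟨a, b⟩, hab, huniq⟩ => ?_⟩
  · obtain ⟨a, b, hab, rfl⟩ := exists_canBump_of_covers hA hC hcov
    exact ⟨(a, b), hab, fun ⟨p, q⟩ hpq =>
      hA.isCornerFn.eq_of_ofCornerFn_bump_eq hpq hab (huniq _ (covers_ofCornerFn_bump hA hpq))⟩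
  · refine ⟨hA, _, covers_ofCornerFn_bump hA hab, fun C ⟨hC, hcov⟩ => ?_⟩
    obtain ⟨p, q, hpq, rfl⟩ := exists_canBump_of_covers hA hC hcov
    obtain ⟨⟩ := huniq (p, q) hpq
    rfl

lemma IsCornerFn.eq_irredFn (V : IsCornerFn n r) {a b : ℕ} (hab : CanBump n r a b)
    (huniq : ∀ p q, CanBump n r p q → p = a ∧ q = b) {p q : ℕ} (hp : p ≤ n) (hq : q ≤ n) :
    r p q = irredFn a b (r a b) p q := by
  have adm := V.admissible hab
  obtain ⟨-, ha, -, hb⟩ := adm.lt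
  refine (V.le_irredFn ha.le hb.le le_rfl hp hq).antisymm (not_lt.1 fun hlt => ?_)
  obtain ⟨p, q, -, -, hlt, hpq⟩ :=
    V.exists_canBump (isCornerFn_irredFn adm) ⟨p, q, hp, hq, hlt⟩
  obtain ⟨rfl, rfl⟩ := huniq p q hpq
  exact hlt.ne (irredFn_self adm).symm

lemma joinIrred_iff :
    JoinIrred A ↔ ∃ a b s, Admissible n a b s ∧ A = ofCornerFn n (irredFn a b s) := by
  constructor
  · intro hJ
    have V := hJ.1.isCornerFn
    obtain ⟨⟨a, b⟩, hab, huniq⟩ := (joinIrred_iff_existsUnique_canBump hJ.1).1 hJ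
    refine ⟨a, b, _, V.admissible hab, eq_ofCornerFn fun p q hp hq => ?_⟩
    exact V.eq_irredFn hab (fun p q h => Prod.mk.inj (huniq (p, q) h)) hp hq
  · rintro ⟨a, b, s, adm, rfl⟩
    have K := isCornerFn_irredFn adm
    rw [joinIrred_iff_existsUnique_canBump K.isASM_ofCornerFn]
    have hK : ∀ p q,
        CanBump n (cornerFn (ofCornerFn n (irredFn a b s))) p q ↔ p = a ∧ q = b := fun p q =>
      ⟨fun h => (canBump_irredFn_iff adm).1 (h.congr fun _ _ => K.cornerFn_ofCornerFn),
        fun h => ((canBump_irredFn_iff adm).2 h).congr fun _ _ hp hq =>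
          (K.cornerFn_ofCornerFn hp hq).symm⟩
    exact ⟨(a, b), (hK a b).2 ⟨rfl, rfl⟩, fun x hx => Prod.ext_iff.2 ((hK x.1 x.2).1 hx)⟩

lemma ofCornerFn_irredFn_le_iff (hB : IsASM B) {a b : ℕ} {s : ℤ} (adm : Admissible n a b s) :
    asmLE (ofCornerFn n (irredFn a b s)) B ↔ cornerFn B a b ≤ s := by
  have K := isCornerFn_irredFn adm
  obtain ⟨-, ha, -, hb⟩ := adm.lt
  rw [asmLE_iff]
  refine ⟨fun h => ?_, fun h p q hp hq => ?_⟩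
  · simpa [K.cornerFn_ofCornerFn ha.le hb.le, irredFn_self adm] using h a b ha.le hb.le
  · rw [K.cornerFn_ofCornerFn hp hq]
    exact hB.isCornerFn.le_irredFn ha.le hb.le h hp hq

lemma ofCornerFn_irredFn_inj {a b a' b' : ℕ} {s s' : ℤ} (adm : Admissible n a b s)
    (adm' : Admissible n a' b' s')
    (h : ofCornerFn n (irredFn a b s) = ofCornerFn n (irredFn a' b' s')) :
    a = a' ∧ b = b' ∧ s = s' := by
  have K := isCornerFn_irredFn adm
  have K' := isCornerFn_irredFn adm'
  have heq : ∀ p q, p ≤ n → q ≤ n → irredFn a b s p q = irredFn a' b' s' p q :=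
    fun p q hp hq => by rw [← K.cornerFn_ofCornerFn hp hq, h, K'.cornerFn_ofCornerFn hp hq]
  obtain ⟨rfl, rfl⟩ :=
    (canBump_irredFn_iff adm').1 (((canBump_irredFn_iff adm).2 ⟨rfl, rfl⟩).congr heq)
  obtain ⟨-, ha, -, hb⟩ := adm.lt
  exact ⟨rfl, rfl, by simpa [irredFn_self adm, irredFn_self adm'] using heq a b ha.le hb.le⟩

noncomputable def irredIndex (n : ℕ) (B : Matrix (Fin n) (Fin n) ℤ) :
    Finset ((_ : ℕ × ℕ) × ℤ) :=
  (range (n + 1) ×ˢ range (n + 1)).sigma fun x => Ico (cornerFn B x.1 x.2) (min (x.1 : ℤ) x.2)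

lemma mem_irredIndex (hB : IsASM B) {a b : ℕ} {s : ℤ} :
    ⟨(a, b), s⟩ ∈ irredIndex n B ↔ Admissible n a b s ∧ cornerFn B a b ≤ s := by
  simp only [irredIndex, mem_sigma, mem_product, mem_range, mem_Ico, Admissible]
  constructor
  · rintro ⟨⟨ha, hb⟩, h₁, h₂⟩
    have := hB.isCornerFn.nonneg (a := a) (b := b) (by omega) (by omega)
    have := hB.isCornerFn.add_sub_le (a := a) (b := b) (by omega) (by omega)
    omega
  · rintro ⟨⟨h₁, h₂⟩, h₃⟩
    omega

lemma asmBeta_eq_card_irredIndex (hB : IsASM B) : asmBeta B = (irredIndex n B).card := by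
  have hset : {A | JoinIrred A ∧ asmLE A B} =
      (fun x : (_ : ℕ × ℕ) × ℤ => ofCornerFn n (irredFn x.1.1 x.1.2 x.2)) ''
        ↑(irredIndex n B) := by
    ext A
    simp only [Set.mem_image, mem_coe, Sigma.exists, Prod.exists, joinIrred_iff]
    constructor
    · rintro ⟨⟨a, b, s, adm, rfl⟩, hle⟩
      exact ⟨a, b, s, (mem_irredIndex hB).2 ⟨adm, (ofCornerFn_irredFn_le_iff hB adm).1 hle⟩,
        rfl⟩
    · rintro ⟨a, b, s, hmem, rfl⟩
      obtain ⟨adm, hle⟩ := (mem_irredIndex hB).1 hmem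
      exact ⟨⟨a, b, s, adm, rfl⟩, (ofCornerFn_irredFn_le_iff hB adm).2 hle⟩
  rw [asmBeta, hset, Set.InjOn.ncard_image, Set.ncard_coe_finset]
  rintro ⟨⟨a, b⟩, s⟩ hx ⟨⟨a', b'⟩, s'⟩ hy h
  obtain ⟨rfl, rfl, rfl⟩ :=
    ofCornerFn_irredFn_inj ((mem_irredIndex hB).1 hx).1 ((mem_irredIndex hB).1 hy).1 h
  rfl

lemma card_irredIndex (hB : IsASM B) :
    ((irredIndex n B).card : ℤ) =
      ∑ a ∈ range (n + 1), ∑ b ∈ range (n + 1), (min (a : ℤ) b - cornerFn B a b) := by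
  rw [irredIndex, card_sigma, Nat.cast_sum, sum_product]
  refine sum_congr rfl fun a ha => sum_congr rfl fun b hb => ?_
  dsimp only
  rw [mem_range] at ha hb
  have := hB.isCornerFn.le_left (a := a) (b := b) (by omega) (by omega)
  have := hB.isCornerFn.le_right (a := a) (b := b) (by omega) (by omega)
  rw [Int.card_Ico, Int.toNat_of_nonneg (by omega)]

lemma sum_min_sub_cornerFn (hB : IsASM B) :
    ∑ a ∈ range (n + 1), ∑ b ∈ range (n + 1), (min (a : ℤ) b - cornerFn B a b) =
      ∑ j ∈ range n, ∑ i ∈ range j, ∑ l ∈ range n, ∑ k ∈ range l,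
        ((l : ℤ) - k) * extendByZero B j k * extendByZero B i l := by
  have V := hB.isCornerFn
  have row_mem : ∀ i < n, ∀ b ≤ n, rowPartial B i b = 0 ∨ rowPartial B i b = 1 := by
    intro i hi b hb
    have := V.step_left i b hi hb
    rw [cornerFn_succ_left] at this
    omega
  have one_sub_row :
      ∀ i < n, ∀ b ≤ n, 1 - rowPartial B i b = ∑ l ∈ Ico b n, extendByZero B i l := by
    intro i hi b hb
    have := V.last_right (i + 1) hi
    rw [cornerFn_succ_left, V.last_right i hi.le] at this
    rw [sum_Ico_eq_sub _ hb, ← rowPartial, ← rowPartial]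
    push_cast at this
    omega
  calc ∑ a ∈ range (n + 1), ∑ b ∈ range (n + 1), (min (a : ℤ) b - cornerFn B a b)
      = ∑ b ∈ range (n + 1), ∑ j ∈ range n, ∑ i ∈ range j,
          rowPartial B j b * (1 - rowPartial B i b) := by
        rw [sum_comm]
        refine sum_congr rfl fun b hb => ?_
        have hb : b ≤ n := Nat.lt_succ_iff.1 (mem_range.1 hb)
        rw [← sum_range_min_sub_partialSum _ n fun i hi => row_mem i hi b hb,
          show ∑ p ∈ range n, rowPartial B p b = b from V.last_left b hb]
        rfl
    _ = ∑ j ∈ range n, ∑ i ∈ range j, ∑ b ∈ range (n + 1),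
          (∑ k ∈ range b, extendByZero B j k) * ∑ l ∈ Ico b n, extendByZero B i l := by
        rw [sum_comm]
        refine sum_congr rfl fun j hj => ?_
        rw [sum_comm]
        refine sum_congr rfl fun i hi => sum_congr rfl fun b hb => ?_
        rw [one_sub_row i ((mem_range.1 hi).trans (mem_range.1 hj)) b
          (Nat.lt_succ_iff.1 (mem_range.1 hb)), rowPartial]
    _ = _ := sum_congr rfl fun j _ => sum_congr rfl fun i _ => sum_range_mul_sum_Ico _ _ n

lemma weightedInversions_eq (B : Matrix (Fin n) (Fin n) ℤ) :
    ∑ i : Fin n, ∑ j : Fin n, ∑ k : Fin n, ∑ l : Fin n,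
        (if i < j ∧ k < l then ((l : ℤ) - (k : ℤ)) * B j k * B i l else 0) =
      ∑ j ∈ range n, ∑ i ∈ range j, ∑ l ∈ range n, ∑ k ∈ range l,
        ((l : ℤ) - k) * extendByZero B j k * extendByZero B i l := by
  simp only [ite_and, sum_ite_irrel, sum_const_zero, ← extendByZero_val B]
  rw [Fin.sum_sum_ite_lt fun i j => ∑ k : Fin n, ∑ l : Fin n,
    if k < l then ((l : ℤ) - k) * extendByZero B j k * extendByZero B i l else 0]
  exact sum_congr rfl fun j _ => sum_congr rfl fun i _ =>
    Fin.sum_sum_ite_lt fun k l => ((l : ℤ) - k) * extendByZero B j k * extendByZero B i l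

end ASM

theorem beta_eq_weighted_inversions {n : ℕ} (B : Matrix (Fin n) (Fin n) ℤ)
    (hB : IsASM B) :
    (asmBeta B : ℤ) =
      ∑ i : Fin n, ∑ j : Fin n, ∑ k : Fin n, ∑ l : Fin n,
        if i < j ∧ k < l then ((l : ℤ) - (k : ℤ)) * B j k * B i l else 0 := by
  rw [ASM.asmBeta_eq_card_irredIndex hB, ASM.card_irredIndex hB, ASM.sum_min_sub_cornerFn hB,
    ASM.weightedInversions_eq]
end

section
/- For every alternating sign matrix A = (a_{ij}) of size n, β(A) = Σ_{i=1}^{n} Σ_{j=1}^{n} (δ_{ij} − a_{ij})·(n−i+1)·(n−j+1), where δ_{ij} is the Kronecker delta. -/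
open Matrix

namespace BS
variable {n : ℕ}

def cs (A : Matrix (Fin n) (Fin n) ℤ) (i j : ℕ) : ℤ :=
  ∑ p : Fin n, ∑ q : Fin n, if (p:ℕ) < i ∧ (q:ℕ) < j then A p q else 0

def rpart (A : Matrix (Fin n) (Fin n) ℤ) (i : Fin n) (j : ℕ) : ℤ :=
  ∑ q : Fin n, if (q:ℕ) < j then A i q else 0


lemma sum_single_fin (f : Fin n → ℤ) {t : ℕ} (ht : t < n) :
    (∑ p : Fin n, if (p:ℕ) = t then f p else 0) = f ⟨t, ht⟩ := by
  rw [Finset.sum_eq_single ⟨t, ht⟩]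
  · simp
  · intro b _ hb
    rw [if_neg]
    intro h; exact hb (Fin.ext h)
  · simp

lemma sum_single_fin' (f : Fin n → ℤ) {t : ℕ} (ht : ¬ t < n) :
    (∑ p : Fin n, if (p:ℕ) = t then f p else 0) = 0 := by
  apply Finset.sum_eq_zero
  intro p _
  rw [if_neg]
  intro h; exact ht (h ▸ p.isLt)

lemma cs_transpose (A : Matrix (Fin n) (Fin n) ℤ) (i j : ℕ) :
    cs Aᵀ i j = cs A j i := by
  unfold cs
  rw [Finset.sum_comm]
  apply Finset.sum_congr rfl; intro p _
  apply Finset.sum_congr rfl; intro q _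
  exact if_congr ⟨fun h => ⟨h.2, h.1⟩, fun h => ⟨h.2, h.1⟩⟩ rfl rfl

lemma cnt_lt (j : ℕ) : (∑ q : Fin n, if (q:ℕ) < j then (1:ℤ) else 0) = min j n := by
  induction j with
  | zero => simp
  | succ j ih =>
    have : ∀ q : Fin n, (if (q:ℕ) < j+1 then (1:ℤ) else 0)
        = (if (q:ℕ) < j then (1:ℤ) else 0) + (if (q:ℕ) = j then (1:ℤ) else 0) := by
      intro q; split_ifs <;> omega
    rw [Finset.sum_congr rfl (fun q _ => this q), Finset.sum_add_distrib, ih]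
    by_cases hj : j < n
    · rw [sum_single_fin (fun _ => (1:ℤ)) hj]; omega
    · rw [sum_single_fin' (fun _ => (1:ℤ)) hj]; omega

lemma rpart_zero (A : Matrix (Fin n) (Fin n) ℤ) (i : Fin n) : rpart A i 0 = 0 := by
  simp [rpart]

lemma rpart_succ (A : Matrix (Fin n) (Fin n) ℤ) (i : Fin n) {j : ℕ} (hj : j < n) :
    rpart A i (j+1) = rpart A i j + A i ⟨j, hj⟩ := by
  unfold rpart
  rw [← sum_single_fin (fun q => A i q) hj, ← Finset.sum_add_distrib]
  apply Finset.sum_congr rfl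
  intro q _
  by_cases h1 : (q:ℕ) < j <;> by_cases h2 : (q:ℕ) = j <;>
    simp [h1, h2] <;> omega

lemma rpart_ge (A : Matrix (Fin n) (Fin n) ℤ) (i : Fin n) {j : ℕ} (hj : n ≤ j) :
    rpart A i j = ∑ q, A i q := by
  unfold rpart
  apply Finset.sum_congr rfl
  intro q _
  rw [if_pos (lt_of_lt_of_le q.isLt hj)]

lemma rpart_eq_Iic (A : Matrix (Fin n) (Fin n) ℤ) (i : Fin n) {j : ℕ} (hj : j < n) :
    rpart A i (j+1) = ∑ k ∈ Finset.Iic (⟨j, hj⟩ : Fin n), A i k := by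
  unfold rpart
  rw [← Finset.sum_filter]
  apply Finset.sum_congr
  · ext q; simp [Finset.mem_Iic, Fin.le_def, Nat.lt_succ_iff]
  · intros; rfl

lemma cs_zero_left (A : Matrix (Fin n) (Fin n) ℤ) (j : ℕ) : cs A 0 j = 0 := by
  simp [cs]

lemma cs_zero_right (A : Matrix (Fin n) (Fin n) ℤ) (i : ℕ) : cs A i 0 = 0 := by
  simp [cs]

lemma cs_succ_left (A : Matrix (Fin n) (Fin n) ℤ) {i : ℕ} (hi : i < n) (j : ℕ) :
    cs A (i+1) j = cs A i j + rpart A ⟨i, hi⟩ j := by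
  unfold cs rpart
  rw [← sum_single_fin (fun p => ∑ q : Fin n, if (q:ℕ) < j then A p q else 0) hi,
    ← Finset.sum_add_distrib]
  apply Finset.sum_congr rfl
  intro p _
  by_cases h2 : (p:ℕ) = i
  · have hp : p = ⟨i, hi⟩ := Fin.ext h2
    subst hp
    rw [show (∑ q : Fin n, if ((⟨i, hi⟩ : Fin n) : ℕ) < i ∧ (q:ℕ) < j then A ⟨i,hi⟩ q else 0) = 0
        from Finset.sum_eq_zero (fun q _ => if_neg (fun h => absurd h.1 (by simp))),
      if_pos rfl, zero_add]
    apply Finset.sum_congr rfl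
    intro q _
    exact if_congr ⟨fun h => h.2, fun h => ⟨by simp, h⟩⟩ rfl rfl
  · rw [if_neg h2, add_zero]
    apply Finset.sum_congr rfl
    intro q _
    exact if_congr ⟨fun h => ⟨by omega, h.2⟩, fun h => ⟨by omega, h.2⟩⟩ rfl rfl

lemma cs_succ_right (A : Matrix (Fin n) (Fin n) ℤ) (i : ℕ) {j : ℕ} (hj : j < n) :
    cs A i (j+1) = cs A i j + rpart Aᵀ ⟨j, hj⟩ i := by
  rw [← cs_transpose A (j+1) i, ← cs_transpose A j i]
  exact cs_succ_left Aᵀ hj i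

lemma isASM_transpose {A : Matrix (Fin n) (Fin n) ℤ} (hA : IsASM A) : IsASM Aᵀ := by
  obtain ⟨h1, h2, h3, h4, h5⟩ := hA
  exact ⟨fun i j => h1 j i, fun i j => h3 j i, fun i j => h2 j i, h5, h4⟩

lemma rpart01 {A : Matrix (Fin n) (Fin n) ℤ} (hA : IsASM A) (i : Fin n) (j : ℕ) :
    rpart A i j = 0 ∨ rpart A i j = 1 := by
  rcases Nat.lt_or_ge j (n+1) with hj | hj
  · match j, hj with
    | 0, _ => exact Or.inl (rpart_zero A i)
    | (j'+1), hj =>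
      rw [rpart_eq_Iic A i (by omega : j' < n)]
      exact hA.2.1 i ⟨j', by omega⟩
  · rw [rpart_ge A i (by omega)]
    exact Or.inr (hA.2.2.2.1 i)

lemma cs_top_left {A : Matrix (Fin n) (Fin n) ℤ} (hA : IsASM A) {j : ℕ} (hj : j ≤ n) :
    cs A n j = j := by
  have : cs A n j = ∑ q : Fin n, if (q:ℕ) < j then (∑ p, A p q) else 0 := by
    unfold cs
    rw [Finset.sum_comm]
    apply Finset.sum_congr rfl
    intro q _
    by_cases h : (q:ℕ) < j
    · rw [if_pos h]
      apply Finset.sum_congr rfl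
      intro p _
      rw [if_pos ⟨p.isLt, h⟩]
    · rw [if_neg h]
      exact Finset.sum_eq_zero (fun p _ => if_neg (fun hh => h hh.2))
  rw [this, Finset.sum_congr rfl (fun q _ => by rw [hA.2.2.2.2 q]), cnt_lt]
  omega

structure Valid (n : ℕ) (R : ℕ → ℕ → ℤ) : Prop where
  zl : ∀ j, R 0 j = 0
  zr : ∀ i, R i 0 = 0
  tl : ∀ j, j ≤ n → R n j = j
  tr : ∀ i, i ≤ n → R i n = i
  rs : ∀ i j, i < n → j ≤ n → R (i+1) j = R i j ∨ R (i+1) j = R i j + 1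
  cS : ∀ i j, i ≤ n → j < n → R i (j+1) = R i j ∨ R i (j+1) = R i j + 1

lemma valid_cs {A : Matrix (Fin n) (Fin n) ℤ} (hA : IsASM A) : Valid n (cs A) where
  zl := cs_zero_left A
  zr := cs_zero_right A
  tl := fun j hj => cs_top_left hA hj
  tr := fun i hi => by rw [← cs_transpose]; exact cs_top_left (isASM_transpose hA) hi
  rs := fun i j hi _ => by
    rw [cs_succ_left A hi j]
    rcases rpart01 hA ⟨i, hi⟩ j with h | h <;> rw [h] <;> simp
  cS := fun i j _ hj => by
    rw [cs_succ_right A i hj]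
    rcases rpart01 (isASM_transpose hA) ⟨j, hj⟩ i with h | h <;> rw [h] <;> simp

def swapf (R : ℕ → ℕ → ℤ) : ℕ → ℕ → ℤ := fun i j => R j i

lemma Valid.swap {R : ℕ → ℕ → ℤ} (hR : Valid n R) : Valid n (swapf R) :=
  ⟨hR.zr, hR.zl, hR.tr, hR.tl, fun i j hi hj => hR.cS j i hj hi,
    fun i j hi hj => hR.rs j i hj hi⟩

lemma Valid.step2 {R : ℕ → ℕ → ℤ} (hR : Valid n R) (d : ℕ) :
    ∀ {i j : ℕ}, i + d ≤ n → j ≤ n →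
      R i j ≤ R (i+d) j ∧ R (i+d) j ≤ R i j + d := by
  induction d with
  | zero => intro i j _ _; simp
  | succ d ih =>
    intro i j h hj
    obtain ⟨ih1, ih2⟩ := ih (i := i) (j := j) (by omega) hj
    have hr := hR.rs (i+d) j (by omega) hj
    rw [Nat.add_succ, Nat.succ_eq_add_one]
    push_cast
    omega

lemma Valid.mono2 {R : ℕ → ℕ → ℤ} (hR : Valid n R) {p q p' q' : ℕ}
    (hp : p ≤ p') (hq : q ≤ q') (hp' : p' ≤ n) (hq' : q' ≤ n) :
    R p q ≤ R p' q' := by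
  have h1 : R p q ≤ R p' q := by
    have := (hR.step2 (p' - p) (i := p) (j := q) (by omega) (by omega)).1
    rwa [show p + (p' - p) = p' by omega] at this
  have h2 : R p' q ≤ R p' q' := by
    have := ((hR.swap).step2 (q' - q) (i := q) (j := p') (by omega) (by omega)).1
    rw [show q + (q' - q) = q' by omega] at this
    exact this
  omega

lemma Valid.lip2 {R : ℕ → ℕ → ℤ} (hR : Valid n R) {p q p' q' : ℕ}
    (hp : p ≤ p') (hq : q ≤ q') (hp' : p' ≤ n) (hq' : q' ≤ n) :
    R p' q' ≤ R p q + ((p' - p : ℕ) : ℤ) + ((q' - q : ℕ) : ℤ) := by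
  have h1 : R p' q ≤ R p q + ((p' - p : ℕ) : ℤ) := by
    have := (hR.step2 (p' - p) (i := p) (j := q) (by omega) (by omega)).2
    rwa [show p + (p' - p) = p' by omega] at this
  have h2 : R p' q' ≤ R p' q + ((q' - q : ℕ) : ℤ) := by
    have := ((hR.swap).step2 (q' - q) (i := q) (j := p') (by omega) (by omega)).2
    rw [show q + (q' - q) = q' by omega] at this
    exact this
  omega

lemma Valid.nonneg {R : ℕ → ℕ → ℤ} (hR : Valid n R) {i j : ℕ}
    (hi : i ≤ n) (hj : j ≤ n) : 0 ≤ R i j := by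
  have := hR.mono2 (Nat.zero_le i) (Nat.zero_le j) hi hj
  rw [hR.zl 0] at this
  exact this

lemma Valid.ub_left {R : ℕ → ℕ → ℤ} (hR : Valid n R) {i j : ℕ}
    (hi : i ≤ n) (hj : j ≤ n) : R i j ≤ (i : ℤ) := by
  have := hR.mono2 (le_refl i) hj hi (le_refl n)
  rwa [hR.tr i hi] at this

lemma Valid.ub_right {R : ℕ → ℕ → ℤ} (hR : Valid n R) {i j : ℕ}
    (hi : i ≤ n) (hj : j ≤ n) : R i j ≤ (j : ℤ) := by
  have := hR.mono2 hi (le_refl j) (le_refl n) hj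
  rwa [hR.tl j hj] at this

lemma Valid.lb {R : ℕ → ℕ → ℤ} (hR : Valid n R) {i j : ℕ}
    (hi : i ≤ n) (hj : j ≤ n) : (i : ℤ) + (j : ℤ) - (n : ℤ) ≤ R i j := by
  have := hR.lip2 hi hj (le_refl n) (le_refl n)
  rw [hR.tl n (le_refl n)] at this
  have e1 : ((n - i : ℕ) : ℤ) = (n : ℤ) - i := by omega
  have e2 : ((n - j : ℕ) : ℤ) = (n : ℤ) - j := by omega
  omega

def toMat (n : ℕ) (R : ℕ → ℕ → ℤ) : Matrix (Fin n) (Fin n) ℤ :=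
  fun p q => R (p+1) (q+1) - R p (q+1) - R (p+1) q + R p q

lemma rpart_toMat {R : ℕ → ℕ → ℤ} (hzr : ∀ i, R i 0 = 0) (p : Fin n) :
    ∀ j, j ≤ n → rpart (toMat n R) p j = R ((p:ℕ)+1) j - R (p:ℕ) j := by
  intro j
  induction j with
  | zero => intro _; rw [rpart_zero, hzr, hzr]; ring
  | succ j ih =>
    intro hj
    rw [rpart_succ _ _ (by omega : j < n), ih (by omega)]
    show _ + toMat n R p ⟨j, _⟩ = _
    simp only [toMat]
    push_cast
    ring

lemma cs_toMat {R : ℕ → ℕ → ℤ} (hzl : ∀ j, R 0 j = 0) (hzr : ∀ i, R i 0 = 0) :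
    ∀ i, i ≤ n → ∀ j, j ≤ n → cs (toMat n R) i j = R i j := by
  intro i
  induction i with
  | zero => intro _ j _; rw [cs_zero_left, hzl]
  | succ i ih =>
    intro hi j hj
    rw [cs_succ_left _ (by omega : i < n), ih (by omega) j hj,
      rpart_toMat hzr _ j hj]
    show R i j + _ = _
    ring

lemma toMat_cs (A : Matrix (Fin n) (Fin n) ℤ) : toMat n (cs A) = A := by
  funext p q
  have e1 := cs_succ_left A p.isLt ((q:ℕ)+1)
  have e2 := cs_succ_left A p.isLt (q:ℕ)
  have e3 := rpart_succ A p q.isLt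
  simp only [Fin.eta] at e1 e2 e3
  simp only [toMat]
  omega

lemma toMat_swap (R : ℕ → ℕ → ℤ) (p q : Fin n) :
    toMat n (swapf R) p q = toMat n R q p := by
  simp only [toMat, swapf]; ring

lemma rowPartial_toMat {R : ℕ → ℕ → ℤ} (hzr : ∀ i, R i 0 = 0) (i j : Fin n) :
    (∑ k ∈ Finset.Iic j, toMat n R i k) = R ((i:ℕ)+1) ((j:ℕ)+1) - R (i:ℕ) ((j:ℕ)+1) := by
  rw [← rpart_eq_Iic _ _ j.isLt]
  exact rpart_toMat hzr i ((j:ℕ)+1) (by omega)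

lemma rowFull_toMat {R : ℕ → ℕ → ℤ} (hR : Valid n R) (i : Fin n) :
    (∑ k, toMat n R i k) = 1 := by
  rw [← rpart_ge (toMat n R) i (le_refl n), rpart_toMat hR.zr i n (le_refl n),
    hR.tr _ (by omega), hR.tr _ (by omega)]
  push_cast
  ring

lemma isASM_toMat {R : ℕ → ℕ → ℤ} (hR : Valid n R) : IsASM (toMat n R) := by
  refine ⟨?_, ?_, ?_, ?_, ?_⟩
  · intro i j
    have h1 := hR.rs i ((j:ℕ)+1) i.isLt (by omega)
    have h2 := hR.rs i (j:ℕ) i.isLt (by omega)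
    simp only [toMat]
    omega
  · intro i j
    rw [rowPartial_toMat hR.zr i j]
    have := hR.rs i ((j:ℕ)+1) i.isLt (by omega)
    omega
  · intro i j
    have : (∑ k ∈ Finset.Iic i, toMat n R k j) = ∑ k ∈ Finset.Iic i, toMat n (swapf R) j k :=
      Finset.sum_congr rfl (fun k _ => (toMat_swap R j k).symm)
    rw [this, rowPartial_toMat (hR.swap).zr j i]
    have := (hR.swap).rs j ((i:ℕ)+1) j.isLt (by omega)
    omega
  · exact rowFull_toMat hR
  · intro j
    have : (∑ k, toMat n R k j) = ∑ k, toMat n (swapf R) j k :=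
      Finset.sum_congr rfl (fun k _ => (toMat_swap R j k).symm)
    rw [this]
    exact rowFull_toMat hR.swap j

lemma Iic_eq_filter (i : Fin n) :
    Finset.Iic i = Finset.univ.filter (fun p : Fin n => (p:ℕ) < (i:ℕ)+1) := by
  ext p
  simp only [Finset.mem_Iic, Finset.mem_filter, Finset.mem_univ, true_and, Fin.le_def,
    Nat.lt_succ_iff]

lemma cornerSum_eq (A : Matrix (Fin n) (Fin n) ℤ) (i j : Fin n) :
    cornerSum A i j = cs A ((i:ℕ)+1) ((j:ℕ)+1) := by
  unfold cornerSum cs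
  rw [Iic_eq_filter, Finset.sum_filter]
  apply Finset.sum_congr rfl
  intro p _
  by_cases hp : (p:ℕ) < (i:ℕ)+1
  · rw [if_pos hp, Iic_eq_filter, Finset.sum_filter]
    exact Finset.sum_congr rfl
      (fun q _ => if_congr ⟨fun h => ⟨hp, h⟩, fun h => h.2⟩ rfl rfl)
  · rw [if_neg hp]
    symm
    exact Finset.sum_eq_zero (fun q _ => if_neg (fun h => hp h.1))

lemma asmLE_iff (A B : Matrix (Fin n) (Fin n) ℤ) :
    asmLE A B ↔ ∀ i, i ≤ n → ∀ j, j ≤ n → cs B i j ≤ cs A i j := by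
  constructor
  · intro h i hi j hj
    match i, hi, j, hj with
    | 0, _, j, _ => rw [cs_zero_left, cs_zero_left]
    | i+1, _, 0, _ => rw [cs_zero_right, cs_zero_right]
    | i+1, hi, j+1, hj =>
      have := h ⟨i, by omega⟩ ⟨j, by omega⟩
      rwa [cornerSum_eq, cornerSum_eq] at this
  · intro h i j
    rw [cornerSum_eq, cornerSum_eq]
    exact h _ (by omega) _ (by omega)

/-- `R` can be incremented at matrix cell `(i,j)`, i.e. at corner position `(i+1,j+1)`. -/
def Inc (n : ℕ) (R : ℕ → ℕ → ℤ) (i j : ℕ) : Prop :=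
  i + 2 ≤ n ∧ j + 2 ≤ n ∧ R i (j+1) = R (i+1) (j+1) ∧ R (i+1) j = R (i+1) (j+1) ∧
  R (i+1+1) (j+1) = R (i+1) (j+1) + 1 ∧ R (i+1) (j+1+1) = R (i+1) (j+1) + 1

def bump (R : ℕ → ℕ → ℤ) (i j : ℕ) : ℕ → ℕ → ℤ :=
  fun p q => if p = i+1 ∧ q = j+1 then R p q + 1 else R p q

lemma bump_apply_ne (R : ℕ → ℕ → ℤ) (i j : ℕ) {p q : ℕ} (h : ¬ (p = i+1 ∧ q = j+1)) :
    bump R i j p q = R p q := if_neg h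

lemma bump_apply (R : ℕ → ℕ → ℤ) (i j : ℕ) :
    bump R i j (i+1) (j+1) = R (i+1) (j+1) + 1 := if_pos ⟨rfl, rfl⟩

lemma valid_bump {R : ℕ → ℕ → ℤ} (hR : Valid n R) {i j : ℕ}
    (hInc : Inc n R i j) : Valid n (bump R i j) := by
  obtain ⟨hi2, hj2, e1, e2, e3, e4⟩ := hInc
  constructor
  · intro j'
    rw [bump_apply_ne R i j (by omega), hR.zl]
  · intro i'
    rw [bump_apply_ne R i j (by omega), hR.zr]
  · intro j' hj'
    rw [bump_apply_ne R i j (by omega), hR.tl j' hj']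
  · intro i' hi'
    rw [bump_apply_ne R i j (by omega), hR.tr i' hi']
  · intro p q hp hq
    have hr := hR.rs p q hp hq
    by_cases hA : p = i ∧ q = j+1
    · rw [hA.1, hA.2]
      rw [bump_apply, bump_apply_ne R i j (by omega)]
      omega
    · by_cases hB : p = i+1 ∧ q = j+1
      · rw [hB.1, hB.2] at hr ⊢
        rw [bump_apply_ne R i j (by omega), bump_apply]
        omega
      · rw [bump_apply_ne R i j (fun h => hA ⟨by omega, h.2⟩), bump_apply_ne R i j hB]
        exact hr
  · intro p q hp hq
    have hr := hR.cS p q hp hq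
    by_cases hA : p = i+1 ∧ q = j
    · rw [hA.1, hA.2]
      rw [bump_apply, bump_apply_ne R i j (by omega)]
      omega
    · by_cases hB : p = i+1 ∧ q = j+1
      · rw [hB.1, hB.2] at hr ⊢
        rw [bump_apply_ne R i j (by omega), bump_apply]
        omega
      · rw [bump_apply_ne R i j (fun h => hA ⟨h.1, by omega⟩), bump_apply_ne R i j hB]
        exact hr

lemma nav_aux {R T : ℕ → ℕ → ℤ} (hR : Valid n R) (hT : Valid n T) :
    ∀ m i j, i < n → j < n → R (i+1) (j+1) < T (i+1) (j+1) →
      2 * (R (i+1) (j+1)).toNat + (2*n - i - j) ≤ m →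
      ∃ p q, Inc n R p q ∧ R (p+1) (q+1) < T (p+1) (q+1) := by
  intro m
  induction m with
  | zero =>
    intro i j hi hj _ hm
    omega
  | succ m ih =>
    intro i j hi hj hlt hm
    have hi1 : i + 1 < n := by
      rcases Nat.lt_or_ge (i+1) n with h | h
      · exact h
      · exfalso
        have hin : i + 1 = n := by omega
        rw [hin, hR.tl (j+1) (by omega), hT.tl (j+1) (by omega)] at hlt
        exact lt_irrefl _ hlt
    have hj1 : j + 1 < n := by
      rcases Nat.lt_or_ge (j+1) n with h | h
      · exact h
      · exfalso
        have hjn : j + 1 = n := by omega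
        rw [hjn, hR.tr (i+1) (by omega), hT.tr (i+1) (by omega)] at hlt
        exact lt_irrefl _ hlt
    have hRnn : 0 ≤ R (i+1) (j+1) := hR.nonneg (by omega) (by omega)
    by_cases h1 : R i (j+1) = R (i+1) (j+1)
    · by_cases h2 : R (i+1) j = R (i+1) (j+1)
      · by_cases h3 : R (i+1+1) (j+1) = R (i+1) (j+1) + 1
        · by_cases h4 : R (i+1) (j+1+1) = R (i+1) (j+1) + 1
          · exact ⟨i, j, ⟨by omega, by omega, h1, h2, h3, h4⟩, hlt⟩
          · -- move right: (i, j+1)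
            have e : R (i+1) (j+1+1) = R (i+1) (j+1) := by
              rcases hR.cS (i+1) (j+1) (by omega) (by omega) with h | h
              · exact h
              · exact absurd h h4
            have t : T (i+1) (j+1) ≤ T (i+1) (j+1+1) := by
              rcases hT.cS (i+1) (j+1) (by omega) (by omega) with h | h <;> omega
            exact ih i (j+1) hi hj1 (by omega) (by omega)
        · -- move down: (i+1, j)
          have e : R (i+1+1) (j+1) = R (i+1) (j+1) := by
            rcases hR.rs (i+1) (j+1) (by omega) (by omega) with h | h
            · exact h
            · exact absurd h h3
          have t : T (i+1) (j+1) ≤ T (i+1+1) (j+1) := by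
            rcases hT.rs (i+1) (j+1) (by omega) (by omega) with h | h <;> omega
          exact ih (i+1) j hi1 hj (by omega) (by omega)
      · -- move left: (i, j-1)
        have e : R (i+1) (j+1) = R (i+1) j + 1 := by
          rcases hR.cS (i+1) j (by omega) (by omega) with h | h
          · exact absurd h.symm h2
          · exact h
        have hj0 : j ≠ 0 := by
          intro h0
          subst h0
          rw [hR.zr (i+1)] at e
          have t1 : T (i+1) (0+1) ≤ T (i+1) 0 + 1 := by
            rcases hT.cS (i+1) 0 (by omega) (by omega) with h | h <;> omega
          rw [hT.zr (i+1)] at t1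
          omega
        obtain ⟨j', rfl⟩ : ∃ j', j = j' + 1 := ⟨j - 1, by omega⟩
        have t : T (i+1) (j'+1+1) ≤ T (i+1) (j'+1) + 1 := by
          rcases hT.cS (i+1) (j'+1) (by omega) (by omega) with h | h <;> omega
        have hnn' : 0 ≤ R (i+1) (j'+1) := hR.nonneg (by omega) (by omega)
        exact ih i j' hi (by omega) (by omega) (by omega)
    · -- move up: (i-1, j)
      have e : R (i+1) (j+1) = R i (j+1) + 1 := by
        rcases hR.rs i (j+1) (by omega) (by omega) with h | h
        · exact absurd h.symm h1
        · exact h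
      have hi0 : i ≠ 0 := by
        intro h0
        subst h0
        rw [hR.zl (j+1)] at e
        have t1 : T (0+1) (j+1) ≤ T 0 (j+1) + 1 := by
          rcases hT.rs 0 (j+1) (by omega) (by omega) with h | h <;> omega
        rw [hT.zl (j+1)] at t1
        omega
      obtain ⟨i', rfl⟩ : ∃ i', i = i' + 1 := ⟨i - 1, by omega⟩
      have t : T (i'+1+1) (j+1) ≤ T (i'+1) (j+1) + 1 := by
        rcases hT.rs (i'+1) (j+1) (by omega) (by omega) with h | h <;> omega
      have hnn' : 0 ≤ R (i'+1) (j+1) := hR.nonneg (by omega) (by omega)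
      exact ih i' j (by omega) hj (by omega) (by omega)

lemma nav {R T : ℕ → ℕ → ℤ} (hR : Valid n R) (hT : Valid n T)
    {i j : ℕ} (hi : i < n) (hj : j < n) (hlt : R (i+1) (j+1) < T (i+1) (j+1)) :
    ∃ p q, Inc n R p q ∧ R (p+1) (q+1) < T (p+1) (q+1) :=
  nav_aux hR hT (2 * (R (i+1) (j+1)).toNat + (2*n - i - j)) i j hi hj hlt (le_refl _)

/-- Corner-sum function of the join-irreducible ASM `J_{i,j,k}` (cell-indexed). -/
def Rj (i j : ℕ) (k : ℤ) : ℕ → ℕ → ℤ :=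
  fun p q => min (min (p:ℤ) (q:ℤ)) (k + max 0 ((p:ℤ) - ((i:ℤ)+1)) + max 0 ((q:ℤ) - ((j:ℤ)+1)))

def adm (n i j : ℕ) (k : ℤ) : Prop :=
  0 ≤ k ∧ (i:ℤ) + (j:ℤ) + 2 - (n:ℤ) ≤ k ∧ k ≤ (i:ℤ) ∧ k ≤ (j:ℤ)

lemma adm.ilt {i j : ℕ} {k : ℤ} (h : adm n i j k) : i + 2 ≤ n ∧ j + 2 ≤ n := by
  obtain ⟨h1, h2, h3, h4⟩ := h
  omega

lemma valid_Rj {i j : ℕ} {k : ℤ} (h : adm n i j k) : Valid n (Rj i j k) := by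
  obtain ⟨h1, h2, h3, h4⟩ := h
  constructor
  · intro q; simp only [Rj]; push_cast; omega
  · intro p; simp only [Rj]; push_cast; omega
  · intro q hq
    simp only [Rj]
    have : ((n:ℤ)) = (n:ℕ) := rfl
    push_cast
    omega
  · intro p hp
    simp only [Rj]
    push_cast
    omega
  · intro p q hp hq
    simp only [Rj]
    push_cast
    omega
  · intro p q hp hq
    simp only [Rj]
    push_cast
    omega

lemma Rj_val {i j : ℕ} {k : ℤ} (h : adm n i j k) : Rj i j k (i+1) (j+1) = k := by
  obtain ⟨h1, h2, h3, h4⟩ := h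
  simp only [Rj]
  push_cast
  omega

lemma inc_Rj {i j : ℕ} {k : ℤ} (h : adm n i j k) : Inc n (Rj i j k) i j := by
  obtain ⟨hin, hjn⟩ := h.ilt
  obtain ⟨h1, h2, h3, h4⟩ := h
  refine ⟨hin, hjn, ?_, ?_, ?_, ?_⟩ <;> (simp only [Rj]; push_cast; omega)

lemma inc_Rj_unique {i j p q : ℕ} {k : ℤ} (h : adm n i j k)
    (hpq : Inc n (Rj i j k) p q) : p = i ∧ q = j := by
  obtain ⟨h1, h2, h3, h4⟩ := h
  obtain ⟨hp2, hq2, e1, e2, e3, e4⟩ := hpq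
  simp only [Rj] at e1 e2 e3 e4
  push_cast at e1 e2 e3 e4
  omega

lemma valid_le_Rj {R : ℕ → ℕ → ℤ} (hV : Valid n R) {i j : ℕ} {k : ℤ}
    (hi : i + 1 ≤ n) (hj : j + 1 ≤ n) (hk : R (i+1) (j+1) ≤ k) :
    ∀ p, p ≤ n → ∀ q, q ≤ n → R p q ≤ Rj i j k p q := by
  intro p hp q hq
  have hub1 := hV.ub_left hp hq
  have hub2 := hV.ub_right hp hq
  have hm : R p q ≤ R (max p (i+1)) (max q (j+1)) :=
    hV.mono2 (le_max_left _ _) (le_max_left _ _) (by omega) (by omega)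
  have hl : R (max p (i+1)) (max q (j+1)) ≤ R (i+1) (j+1)
      + ((max p (i+1) - (i+1) : ℕ) : ℤ) + ((max q (j+1) - (j+1) : ℕ) : ℤ) :=
    hV.lip2 (le_max_right _ _) (le_max_right _ _) (by omega) (by omega)
  simp only [Rj]
  push_cast
  omega

lemma toMat_congr {R S : ℕ → ℕ → ℤ} (h : ∀ p, p ≤ n → ∀ q, q ≤ n → R p q = S p q) :
    toMat n R = toMat n S := by
  funext p q
  simp only [toMat]
  rw [h (p+1) (by omega) (q+1) (by omega), h (p:ℕ) (by omega) (q+1) (by omega),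
    h (p+1) (by omega) (q:ℕ) (by omega), h (p:ℕ) (by omega) (q:ℕ) (by omega)]

lemma not_asmLE_iff (A B : Matrix (Fin n) (Fin n) ℤ) :
    ¬ asmLE A B ↔ ∃ p q : Fin n, cs A ((p:ℕ)+1) ((q:ℕ)+1) < cs B ((p:ℕ)+1) ((q:ℕ)+1) := by
  unfold asmLE
  push_neg
  constructor
  · rintro ⟨p, q, h⟩
    exact ⟨p, q, by rwa [cornerSum_eq, cornerSum_eq] at h⟩
  · rintro ⟨p, q, h⟩
    exact ⟨p, q, by rwa [cornerSum_eq, cornerSum_eq]⟩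

lemma bump_ge (R : ℕ → ℕ → ℤ) (i j p q : ℕ) : R p q ≤ bump R i j p q := by
  unfold bump
  split_ifs <;> omega

lemma cover_of_inc {A : Matrix (Fin n) (Fin n) ℤ} (hA : IsASM A) {i j : ℕ}
    (hInc : Inc n (cs A) i j) :
    IsASM (toMat n (bump (cs A) i j)) ∧ asmCovers (toMat n (bump (cs A) i j)) A := by
  have hV := valid_cs hA
  have hBV := valid_bump hV hInc
  set C := toMat n (bump (cs A) i j) with hCdef
  have csC : ∀ p, p ≤ n → ∀ q, q ≤ n → cs C p q = bump (cs A) i j p q :=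
    fun p hp q hq => cs_toMat hBV.zl hBV.zr p hp q hq
  have hin : i + 2 ≤ n := hInc.1
  have hjn : j + 2 ≤ n := hInc.2.1
  have hCA : asmLE C A := by
    rw [asmLE_iff]
    intro p hp q hq
    rw [csC p hp q hq]
    exact bump_ge _ i j p q
  have hstrict : cs A (i+1) (j+1) < cs C (i+1) (j+1) := by
    rw [csC (i+1) (by omega) (j+1) (by omega), bump_apply]
    omega
  have hnAC : ¬ asmLE A C := by
    rw [not_asmLE_iff]
    exact ⟨⟨i, by omega⟩, ⟨j, by omega⟩, hstrict⟩
  refine ⟨isASM_toMat hBV, ⟨hCA, hnAC⟩, ?_⟩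
  rintro E hE ⟨hCE, hnEC⟩ ⟨hEA, hnAE⟩
  -- E strictly between C and A : impossible
  rw [not_asmLE_iff] at hnAE
  obtain ⟨p0, q0, hp0⟩ := hnAE
  have hCE' := (asmLE_iff C E).1 hCE
  have hEA' := (asmLE_iff E A).1 hEA
  -- cs E ≤ cs C = bump, and cs A ≤ cs E
  have hspecial : (p0:ℕ) = i ∧ (q0:ℕ) = j := by
    by_contra hne
    have h1 := hCE' ((p0:ℕ)+1) (by omega) ((q0:ℕ)+1) (by omega)
    rw [csC _ (by omega) _ (by omega), bump_apply_ne _ _ _ (by omega)] at h1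
    omega
  rw [not_asmLE_iff] at hnEC
  obtain ⟨p1, q1, hp1⟩ := hnEC
  by_cases hsp : (p1:ℕ) = i ∧ (q1:ℕ) = j
  · have h1 := hCE' ((p1:ℕ)+1) (by omega) ((q1:ℕ)+1) (by omega)
    have h2 := hEA' ((p1:ℕ)+1) (by omega) ((q1:ℕ)+1) (by omega)
    rw [csC _ (by omega) _ (by omega)] at hp1 h1
    rw [hsp.1, hsp.2, bump_apply] at hp1 h1
    rw [hsp.1, hsp.2] at h2
    -- hp0 : cs A < cs E at (p0,q0) = special = (i,j)
    rw [hspecial.1, hspecial.2] at hp0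
    omega
  · have h2 := hEA' ((p1:ℕ)+1) (by omega) ((q1:ℕ)+1) (by omega)
    rw [csC _ (by omega) _ (by omega), bump_apply_ne _ _ _ (by omega)] at hp1
    omega

lemma inc_of_cover {A E : Matrix (Fin n) (Fin n) ℤ} (hA : IsASM A) (hE : IsASM E)
    (hcov : asmCovers E A) :
    ∃ i j, Inc n (cs A) i j ∧ E = toMat n (bump (cs A) i j) := by
  obtain ⟨⟨hEA, hnAE⟩, hmin⟩ := hcov
  have hEA' := (asmLE_iff E A).1 hEA
  rw [not_asmLE_iff] at hnAE
  obtain ⟨p0, q0, hp0⟩ := hnAE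
  obtain ⟨i, j, hInc, hstrict⟩ := nav (valid_cs hA) (valid_cs hE) p0.isLt q0.isLt hp0
  refine ⟨i, j, hInc, ?_⟩
  obtain ⟨hDASM, ⟨hDA, hnAD⟩, _⟩ := cover_of_inc hA hInc
  set D := toMat n (bump (cs A) i j) with hDdef
  have hin : i + 2 ≤ n := hInc.1
  have hjn : j + 2 ≤ n := hInc.2.1
  have hV := valid_cs hA
  have hBV := valid_bump hV hInc
  have csD : ∀ p, p ≤ n → ∀ q, q ≤ n → cs D p q = bump (cs A) i j p q :=
    fun p hp q hq => cs_toMat hBV.zl hBV.zr p hp q hq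
  have hED : asmLE E D := by
    rw [asmLE_iff]
    intro p hp q hq
    rw [csD p hp q hq]
    by_cases hsp : p = i+1 ∧ q = j+1
    · rw [hsp.1, hsp.2, bump_apply]
      omega
    · rw [bump_apply_ne _ _ _ hsp]
      exact hEA' p hp q hq
  by_cases hDE : asmLE D E
  · -- cs E = bump everywhere on grid, so E = D
    have hgrid : ∀ p, p ≤ n → ∀ q, q ≤ n → cs E p q = bump (cs A) i j p q := by
      intro p hp q hq
      have h1 := (asmLE_iff E D).1 hED p hp q hq
      have h2 := (asmLE_iff D E).1 hDE p hp q hq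
      rw [csD p hp q hq] at h1 h2
      omega
    calc E = toMat n (cs E) := (toMat_cs E).symm
    _ = toMat n (bump (cs A) i j) := toMat_congr hgrid
  · exact absurd ⟨hDA, hnAD⟩ (hmin D hDASM ⟨hED, hDE⟩)

lemma inc_congr {R S : ℕ → ℕ → ℤ} (hg : ∀ p, p ≤ n → ∀ q, q ≤ n → R p q = S p q)
    {i j : ℕ} (h : Inc n S i j) : Inc n R i j := by
  obtain ⟨h1, h2, e1, e2, e3, e4⟩ := h
  refine ⟨h1, h2, ?_, ?_, ?_, ?_⟩ <;>
    rw [hg _ (by omega) _ (by omega), hg _ (by omega) _ (by omega)] <;>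
    assumption

lemma joinIrred_iff {A : Matrix (Fin n) (Fin n) ℤ} (hA : IsASM A) :
    JoinIrred A ↔ ∃! pq : ℕ × ℕ, Inc n (cs A) pq.1 pq.2 := by
  constructor
  · rintro ⟨-, C0, ⟨hC0ASM, hC0cov⟩, huniq⟩
    obtain ⟨i, j, hInc, hCeq⟩ := inc_of_cover hA hC0ASM hC0cov
    refine ⟨(i, j), hInc, ?_⟩
    rintro ⟨p, q⟩ hpq
    simp only at hpq ⊢
    obtain ⟨hD, hDcov⟩ := cover_of_inc hA hpq
    have heq : toMat n (bump (cs A) p q) = C0 := huniq _ ⟨hD, hDcov⟩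
    rw [hCeq] at heq
    have hBV1 := valid_bump (valid_cs hA) hpq
    have hBV2 := valid_bump (valid_cs hA) hInc
    have hgrid : ∀ a, a ≤ n → ∀ b, b ≤ n →
        bump (cs A) p q a b = bump (cs A) i j a b := by
      intro a ha b hb
      rw [← cs_toMat hBV1.zl hBV1.zr a ha b hb, ← cs_toMat hBV2.zl hBV2.zr a ha b hb, heq]
    have hp2 : p + 2 ≤ n := hpq.1
    have hq2 : q + 2 ≤ n := hpq.2.1
    by_contra hne
    have hval := hgrid (p+1) (by omega) (q+1) (by omega)
    rw [bump_apply, bump_apply_ne _ _ _ (by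
      intro hcon
      apply hne
      have : p = i ∧ q = j := by omega
      rw [Prod.mk.injEq]
      omega)] at hval
    omega
  · rintro ⟨⟨i, j⟩, hInc, huniq⟩
    simp only at hInc
    obtain ⟨hD, hDcov⟩ := cover_of_inc hA hInc
    refine ⟨hA, toMat n (bump (cs A) i j), ⟨hD, hDcov⟩, ?_⟩
    rintro E ⟨hE, hEcov⟩
    obtain ⟨p, q, hpq, hEeq⟩ := inc_of_cover hA hE hEcov
    have hpqij := huniq (p, q) hpq
    rw [Prod.mk.injEq] at hpqij
    rw [hEeq, hpqij.1, hpqij.2]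

lemma joinIrred_eq_Rj {A : Matrix (Fin n) (Fin n) ℤ} (hJI : JoinIrred A) :
    ∃ (i j : ℕ) (k : ℤ), adm n i j k ∧ A = toMat n (Rj i j k) ∧ cs A (i+1) (j+1) = k := by
  have hA := hJI.1
  obtain ⟨⟨i, j⟩, hInc, huniq⟩ := (joinIrred_iff hA).1 hJI
  simp only at hInc huniq
  have hV := valid_cs hA
  have hin : i + 2 ≤ n := hInc.1
  have hjn : j + 2 ≤ n := hInc.2.1
  set k := cs A (i+1) (j+1) with hk
  have hadm : adm n i j k := by
    refine ⟨hV.nonneg (by omega) (by omega), ?_, ?_, ?_⟩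
    · have := hV.lb (i := i+1) (j := j+1) (by omega) (by omega)
      push_cast at this ⊢
      omega
    · have h4 := hInc.2.2.2.2.2
      have := hV.ub_left (i := i+1) (j := j+1+1) (by omega) (by omega)
      push_cast at this ⊢
      omega
    · have h3 := hInc.2.2.2.2.1
      have := hV.ub_right (i := i+1+1) (j := j+1) (by omega) (by omega)
      push_cast at this ⊢
      omega
  have hJV := valid_Rj hadm
  have hle : ∀ p, p ≤ n → ∀ q, q ≤ n → cs A p q ≤ Rj i j k p q :=
    valid_le_Rj hV (by omega) (by omega) (le_refl k)
  have heq : ∀ p, p ≤ n → ∀ q, q ≤ n → cs A p q = Rj i j k p q := by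
    intro p hp q hq
    rcases eq_or_lt_of_le (hle p hp q hq) with h | h
    · exact h
    · exfalso
      match p, q with
      | 0, q => rw [cs_zero_left, hJV.zl] at h; exact lt_irrefl _ h
      | p+1, 0 => rw [cs_zero_right, hJV.zr] at h; exact lt_irrefl _ h
      | p+1, q+1 =>
        obtain ⟨a, b, hInc', hstrict'⟩ := nav hV hJV (by omega) (by omega) h
        have hab := huniq (a, b) hInc'
        rw [Prod.mk.injEq] at hab
        rw [hab.1, hab.2, Rj_val hadm] at hstrict'
        rw [hk] at hstrict'
        exact lt_irrefl _ hstrict'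
  refine ⟨i, j, k, hadm, ?_, rfl⟩
  calc A = toMat n (cs A) := (toMat_cs A).symm
  _ = toMat n (Rj i j k) := toMat_congr heq

lemma asmLE_Rj_iff {B : Matrix (Fin n) (Fin n) ℤ} (hB : IsASM B) {i j : ℕ} {k : ℤ}
    (hadm : adm n i j k) :
    asmLE (toMat n (Rj i j k)) B ↔ cs B (i+1) (j+1) ≤ k := by
  have hin := hadm.ilt
  have hJV := valid_Rj hadm
  have csJ : ∀ p, p ≤ n → ∀ q, q ≤ n → cs (toMat n (Rj i j k)) p q = Rj i j k p q :=
    cs_toMat hJV.zl hJV.zr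
  constructor
  · intro h
    have := (asmLE_iff _ _).1 h (i+1) (by omega) (j+1) (by omega)
    rwa [csJ (i+1) (by omega) (j+1) (by omega), Rj_val hadm] at this
  · intro h
    rw [asmLE_iff]
    intro p hp q hq
    rw [csJ p hp q hq]
    exact valid_le_Rj (valid_cs hB) (by omega) (by omega) h p hp q hq

lemma Rj_inj {i j i' j' : ℕ} {k k' : ℤ} (h : adm n i j k) (h' : adm n i' j' k')
    (heq : toMat n (Rj i j k) = toMat n (Rj i' j' k')) :
    i = i' ∧ j = j' ∧ k = k' := by
  have hJV := valid_Rj h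
  have hJV' := valid_Rj h'
  have hgrid : ∀ p, p ≤ n → ∀ q, q ≤ n → Rj i j k p q = Rj i' j' k' p q := by
    intro p hp q hq
    rw [← cs_toMat hJV.zl hJV.zr p hp q hq, ← cs_toMat hJV'.zl hJV'.zr p hp q hq, heq]
  have hInc' : Inc n (Rj i j k) i' j' := inc_congr hgrid (inc_Rj h')
  obtain ⟨rfl, rfl⟩ := inc_Rj_unique h hInc'
  refine ⟨rfl, rfl, ?_⟩
  obtain ⟨hi2, hj2⟩ := h'.ilt
  rw [← Rj_val h, ← Rj_val h']
  exact hgrid (i'+1) (by omega) (j'+1) (by omega)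

noncomputable def idxSet (B : Matrix (Fin n) (Fin n) ℤ) : Finset (Σ _ : Fin n × Fin n, ℤ) :=
  Finset.univ.sigma (fun ij : Fin n × Fin n =>
    Finset.Icc (cs B ((ij.1:ℕ)+1) ((ij.2:ℕ)+1)) (min ((ij.1:ℕ):ℤ) ((ij.2:ℕ):ℤ)))

def jmap : (Σ _ : Fin n × Fin n, ℤ) → Matrix (Fin n) (Fin n) ℤ :=
  fun t => toMat n (Rj (t.1.1:ℕ) (t.1.2:ℕ) t.2)

lemma adm_of_mem {B : Matrix (Fin n) (Fin n) ℤ} (hB : IsASM B)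
    {t : Σ _ : Fin n × Fin n, ℤ} (ht : t ∈ idxSet B) :
    adm n (t.1.1:ℕ) (t.1.2:ℕ) t.2 ∧ cs B ((t.1.1:ℕ)+1) ((t.1.2:ℕ)+1) ≤ t.2 := by
  obtain ⟨⟨i, j⟩, k⟩ := t
  rw [idxSet, Finset.mem_sigma, Finset.mem_Icc] at ht
  obtain ⟨-, h1, h2⟩ := ht
  dsimp only at h1 h2 ⊢
  have hV := valid_cs hB
  have hnn : 0 ≤ cs B ((i:ℕ)+1) ((j:ℕ)+1) := hV.nonneg (by omega) (by omega)
  have hlb := hV.lb (i := (i:ℕ)+1) (j := (j:ℕ)+1) (by omega) (by omega)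
  refine ⟨⟨by omega, ?_, ?_, ?_⟩, h1⟩
  · push_cast at hlb ⊢; omega
  · simp only [le_min_iff] at h2; omega
  · simp only [le_min_iff] at h2; omega

lemma mem_iff_image {B : Matrix (Fin n) (Fin n) ℤ} (hB : IsASM B) :
    {A : Matrix (Fin n) (Fin n) ℤ | JoinIrred A ∧ asmLE A B} = jmap '' ↑(idxSet B) := by
  ext X
  simp only [Set.mem_setOf_eq, Set.mem_image, Finset.mem_coe]
  constructor
  · rintro ⟨hJI, hle⟩
    obtain ⟨i, j, k, hadm, hXeq, hcsk⟩ := joinIrred_eq_Rj hJI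
    obtain ⟨hi2, hj2⟩ := hadm.ilt
    refine ⟨⟨(⟨i, by omega⟩, ⟨j, by omega⟩), k⟩, ?_, ?_⟩
    · rw [idxSet, Finset.mem_sigma, Finset.mem_Icc]
      refine ⟨Finset.mem_univ _, ?_, ?_⟩
      · dsimp only
        rw [hXeq] at hle
        exact (asmLE_Rj_iff hB hadm).1 hle
      · dsimp only
        exact le_min hadm.2.2.1 hadm.2.2.2
    · dsimp only [jmap]
      exact hXeq.symm
  · rintro ⟨t, ht, rfl⟩
    obtain ⟨hadm, hk⟩ := adm_of_mem hB ht
    have hJV := valid_Rj hadm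
    have hASM : IsASM (jmap t) := isASM_toMat hJV
    have hgrid : ∀ p, p ≤ n → ∀ q, q ≤ n →
        cs (jmap t) p q = Rj (t.1.1:ℕ) (t.1.2:ℕ) t.2 p q := cs_toMat hJV.zl hJV.zr
    constructor
    · rw [joinIrred_iff hASM]
      refine ⟨((t.1.1:ℕ), (t.1.2:ℕ)), ?_, ?_⟩
      · exact inc_congr hgrid (inc_Rj hadm)
      · rintro ⟨p, q⟩ hpq
        simp only at hpq
        have : Inc n (Rj (t.1.1:ℕ) (t.1.2:ℕ) t.2) p q :=
          inc_congr (fun p hp q hq => (hgrid p hp q hq).symm) hpq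
        obtain ⟨rfl, rfl⟩ := inc_Rj_unique hadm this
        rfl
    · exact (asmLE_Rj_iff hB hadm).2 hk

lemma jmap_injOn {B : Matrix (Fin n) (Fin n) ℤ} (hB : IsASM B) :
    Set.InjOn jmap (↑(idxSet B) : Set (Σ _ : Fin n × Fin n, ℤ)) := by
  rintro t ht t' ht' heq
  obtain ⟨hadm, -⟩ := adm_of_mem hB ht
  obtain ⟨hadm', -⟩ := adm_of_mem hB ht'
  obtain ⟨h1, h2, h3⟩ := Rj_inj hadm hadm' heq
  obtain ⟨⟨i, j⟩, k⟩ := t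
  obtain ⟨⟨i', j'⟩, k'⟩ := t'
  dsimp only at h1 h2 h3
  have hi : i = i' := Fin.ext h1
  have hj : j = j' := Fin.ext h2
  subst hi; subst hj; subst h3
  rfl

lemma beta_count {B : Matrix (Fin n) (Fin n) ℤ} (hB : IsASM B) :
    (asmBeta B : ℤ) = ∑ ij : Fin n × Fin n,
      (min ((ij.1:ℕ):ℤ) ((ij.2:ℕ):ℤ) + 1 - cs B ((ij.1:ℕ)+1) ((ij.2:ℕ)+1)) := by
  have h1 : asmBeta B = (idxSet B).card := by
    rw [asmBeta, mem_iff_image hB, Set.ncard_image_of_injOn (jmap_injOn hB),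
      Set.ncard_coe_finset]
  rw [h1, idxSet, Finset.card_sigma, Nat.cast_sum]
  apply Finset.sum_congr rfl
  intro ij _
  rw [Int.card_Icc]
  have hV := valid_cs hB
  have hub1 := hV.ub_left (i := (ij.1:ℕ)+1) (j := (ij.2:ℕ)+1) (by omega) (by omega)
  have hub2 := hV.ub_right (i := (ij.1:ℕ)+1) (j := (ij.2:ℕ)+1) (by omega) (by omega)
  push_cast
  omega

lemma cnt_ge (t : Fin n) :
    (∑ i : Fin n, if (t:ℕ) < (i:ℕ)+1 then (1:ℤ) else 0) = (n:ℤ) - (t:ℕ) := by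
  have flip : ∀ i : Fin n, (if (t:ℕ) < (i:ℕ)+1 then (1:ℤ) else 0)
      = 1 - (if (i:ℕ) < (t:ℕ) then (1:ℤ) else 0) := by
    intro i; split_ifs <;> omega
  rw [Finset.sum_congr rfl (fun i _ => flip i), Finset.sum_sub_distrib, cnt_lt,
    Finset.sum_const, Finset.card_univ, Fintype.card_fin, nsmul_eq_mul, mul_one]
  have := t.isLt
  omega

lemma sum_ind (d : ℤ) (t : Fin n) :
    (∑ i : Fin n, if (t:ℕ) < (i:ℕ)+1 then d else 0) = d * ((n:ℤ) - (t:ℕ)) := by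
  have : ∀ i : Fin n, (if (t:ℕ) < (i:ℕ)+1 then d else 0)
      = d * (if (t:ℕ) < (i:ℕ)+1 then (1:ℤ) else 0) := by
    intro i; split_ifs <;> ring
  rw [Finset.sum_congr rfl (fun i _ => this i), ← Finset.mul_sum, cnt_ge]

lemma sum_cs (M : Matrix (Fin n) (Fin n) ℤ) :
    (∑ ij : Fin n × Fin n, cs M ((ij.1:ℕ)+1) ((ij.2:ℕ)+1))
      = ∑ pq : Fin n × Fin n, M pq.1 pq.2 * ((n:ℤ) - (pq.1:ℕ)) * ((n:ℤ) - (pq.2:ℕ)) := by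
  have expand : ∀ ij : Fin n × Fin n, cs M ((ij.1:ℕ)+1) ((ij.2:ℕ)+1)
      = ∑ pq : Fin n × Fin n,
          (if (pq.1:ℕ) < (ij.1:ℕ)+1 ∧ (pq.2:ℕ) < (ij.2:ℕ)+1 then M pq.1 pq.2 else 0) := by
    intro ij
    rw [cs, Fintype.sum_prod_type]
  rw [Finset.sum_congr rfl (fun ij _ => expand ij), Finset.sum_comm]
  apply Finset.sum_congr rfl
  intro pq _
  rw [Fintype.sum_prod_type]
  have inner : ∀ i : Fin n,
      (∑ j : Fin n, if (pq.1:ℕ) < (i:ℕ)+1 ∧ (pq.2:ℕ) < (j:ℕ)+1 then M pq.1 pq.2 else 0)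
        = (if (pq.1:ℕ) < (i:ℕ)+1 then M pq.1 pq.2 * ((n:ℤ) - (pq.2:ℕ)) else 0) := by
    intro i
    by_cases hp : (pq.1:ℕ) < (i:ℕ)+1
    · rw [if_pos hp, ← sum_ind (M pq.1 pq.2) pq.2]
      exact Finset.sum_congr rfl
        (fun j _ => if_congr ⟨fun h => h.2, fun h => ⟨hp, h⟩⟩ rfl rfl)
    · rw [if_neg hp]
      exact Finset.sum_eq_zero (fun j _ => if_neg (fun h => hp h.1))
  rw [Finset.sum_congr rfl (fun i _ => inner i), sum_ind]
  ring

lemma cs_delta {a b : ℕ} (ha : a ≤ n) (hb : b ≤ n) :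
    cs (fun p q : Fin n => if p = q then (1:ℤ) else 0) a b = min (a:ℤ) (b:ℤ) := by
  unfold cs
  have inner : ∀ p : Fin n,
      (∑ q : Fin n, if (p:ℕ) < a ∧ (q:ℕ) < b then (if p = q then (1:ℤ) else 0) else 0)
        = (if (p:ℕ) < min a b then (1:ℤ) else 0) := by
    intro p
    have perq : ∀ q : Fin n,
        (if (p:ℕ) < a ∧ (q:ℕ) < b then (if p = q then (1:ℤ) else 0) else 0)
          = (if (q:ℕ) = (p:ℕ) then (if (p:ℕ) < a ∧ (p:ℕ) < b then (1:ℤ) else 0) else 0) := by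
      intro q
      by_cases hq : q = p
      · subst hq; simp
      · have hqv : ¬ (q:ℕ) = (p:ℕ) := fun hh => hq (Fin.ext hh)
        rw [if_neg hqv]
        split_ifs with h1 h2
        · exact absurd h2.symm hq
        · rfl
        · rfl
    rw [Finset.sum_congr rfl (fun q _ => perq q), sum_single_fin _ p.isLt]
    exact if_congr ⟨fun h => by omega, fun h => by omega⟩ rfl rfl
  rw [Finset.sum_congr rfl (fun p _ => inner p)]
  have := cnt_lt (n := n) (min a b)
  rw [this]
  push_cast
  omega

theorem beta_formula {A : Matrix (Fin n) (Fin n) ℤ} (hA : IsASM A) :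
    (asmBeta A : ℤ) =
      ∑ i : Fin n, ∑ j : Fin n,
        ((if i = j then 1 else 0) - A i j) * ((n : ℤ) - ((i:ℕ):ℤ)) * ((n : ℤ) - ((j:ℕ):ℤ)) := by
  rw [beta_count hA]
  set D : Matrix (Fin n) (Fin n) ℤ := fun p q => if p = q then (1:ℤ) else 0 with hD
  have step1 : ∀ ij : Fin n × Fin n,
      min ((ij.1:ℕ):ℤ) ((ij.2:ℕ):ℤ) + 1 - cs A ((ij.1:ℕ)+1) ((ij.2:ℕ)+1)
        = cs D ((ij.1:ℕ)+1) ((ij.2:ℕ)+1) - cs A ((ij.1:ℕ)+1) ((ij.2:ℕ)+1) := by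
    intro ij
    rw [hD, cs_delta (by omega) (by omega)]
    push_cast
    omega
  rw [Finset.sum_congr rfl (fun ij _ => step1 ij), Finset.sum_sub_distrib,
    sum_cs, sum_cs, ← Finset.sum_sub_distrib]
  rw [Fintype.sum_prod_type]
  apply Finset.sum_congr rfl
  intro i _
  apply Finset.sum_congr rfl
  intro j _
  have : D i j = if i = j then (1:ℤ) else 0 := rfl
  rw [← this]
  ring

end BS

theorem beta_eq_brualdi_schroeder {n : ℕ} (A : Matrix (Fin n) (Fin n) ℤ)
    (hA : IsASM A) :
    (asmBeta A : ℤ) =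
      ∑ i : Fin n, ∑ j : Fin n,
        ((if i = j then 1 else 0) - A i j) * ((n : ℤ) - (i : ℤ)) * ((n : ℤ) - (j : ℤ)) := by
  rw [BS.beta_formula hA]
end

section
/- Let A, B be alternating sign matrices of size n. Then B covers A in ASM order if and only if there exists a position (r,s) with 1 ≤ r,s ≤ n−1 such that the 2×2 submatrix of B at rows r, r+1 and columns s, s+1 minus the corresponding 2×2 submatrix of A equals [[−1, 1], [1, −1]], and a_{pq} = b_{pq} for all positions (p,q) outside {(r,s),(r,s+1),(r+1,s),(r+1,s+1)}. Moreover, such a position (r,s) is unique. -/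
open Finset Matrix

variable {n : ℕ}

def finInit (n j : ℕ) : Finset (Fin n) := univ.filter fun q => (q : ℕ) < j

@[simp] lemma finInit_zero : finInit n 0 = ∅ := by simp [finInit]

lemma finInit_self : finInit n n = univ := by simp [finInit]

lemma finInit_succ (q : Fin n) : finInit n ((q : ℕ) + 1) = Iic q := by
  ext p
  simp only [finInit, mem_filter, mem_univ, true_and, mem_Iic, Fin.le_def]
  omega

lemma sum_finInit_succ {M : Type*} [AddCommMonoid M] (f : Fin n → M) {i : ℕ} (hi : i < n) :
    ∑ p ∈ finInit n (i + 1), f p = ∑ p ∈ finInit n i, f p + f ⟨i, hi⟩ := by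
  have h : finInit n (i + 1) = insert (⟨i, hi⟩ : Fin n) (finInit n i) := by
    ext p; simp only [finInit, mem_filter, mem_univ, true_and, mem_insert, Fin.ext_iff]; omega
  rw [h, Finset.sum_insert (by simp [finInit]), add_comm]

lemma sum_finInit_sub (f : ℕ → ℤ) {j : ℕ} (hj : j ≤ n) :
    ∑ k ∈ finInit n j, (f (k + 1) - f k) = f j - f 0 := by
  induction j with
  | zero => simp
  | succ j ih => rw [sum_finInit_succ _ hj, ih (by omega)]; ring

lemma forall_le_of_forall_succ {P : ℕ → ℕ → Prop} (h_left : ∀ v, P 0 v) (h_right : ∀ u, P u 0)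
    (h : ∀ i j : Fin n, P (i + 1) (j + 1)) : ∀ u ≤ n, ∀ v ≤ n, P u v := by
  rintro (_ | i) hi (_ | j) hj
  · exact h_left 0
  · exact h_left _
  · exact h_right _
  · exact h ⟨i, hi⟩ ⟨j, hj⟩

def height (A : Matrix (Fin n) (Fin n) ℤ) (i j : ℕ) : ℤ :=
  ∑ p ∈ finInit n i, ∑ q ∈ finInit n j, A p q

@[simp] lemma height_zero_left (A : Matrix (Fin n) (Fin n) ℤ) (j : ℕ) : height A 0 j = 0 := by
  simp [height]

@[simp] lemma height_zero_right (A : Matrix (Fin n) (Fin n) ℤ) (i : ℕ) : height A i 0 = 0 := by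
  simp [height]

lemma cornerSum_eq_height (A : Matrix (Fin n) (Fin n) ℤ) (i j : Fin n) :
    cornerSum A i j = height A (i + 1) (j + 1) := by
  simp [cornerSum, height, finInit_succ]

lemma height_transpose (A : Matrix (Fin n) (Fin n) ℤ) (i j : ℕ) :
    height Aᵀ i j = height A j i :=
  sum_comm

lemma height_succ_left (A : Matrix (Fin n) (Fin n) ℤ) {i : ℕ} (hi : i < n) (j : ℕ) :
    height A (i + 1) j = height A i j + ∑ q ∈ finInit n j, A ⟨i, hi⟩ q :=
  sum_finInit_succ _ hi

lemma asmLE_iff_height_le (A B : Matrix (Fin n) (Fin n) ℤ) :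
    asmLE A B ↔ ∀ u ≤ n, ∀ v ≤ n, height B u v ≤ height A u v := by
  refine ⟨fun h => forall_le_of_forall_succ (by simp) (by simp) fun i j => ?_, fun h i j => ?_⟩
  · simpa only [cornerSum_eq_height] using h i j
  · simpa only [cornerSum_eq_height] using h _ i.2 _ j.2

lemma cornerSum_sub (A B : Matrix (Fin n) (Fin n) ℤ) (i j : Fin n) :
    cornerSum (A - B) i j = cornerSum A i j - cornerSum B i j := by
  simp [cornerSum, sum_sub_distrib]

lemma IsASM.transpose {A : Matrix (Fin n) (Fin n) ℤ} (hA : IsASM A) : IsASM Aᵀ :=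
  ⟨fun i j => hA.1 j i, fun i j => hA.2.2.1 j i, fun i j => hA.2.1 j i, hA.2.2.2.2, hA.2.2.2.1⟩

section IsASM

variable {A : Matrix (Fin n) (Fin n) ℤ}

lemma IsASM.sum_finInit_row_mem (hA : IsASM A) (i : Fin n) {j : ℕ} (hj : j ≤ n) :
    0 ≤ ∑ q ∈ finInit n j, A i q ∧ ∑ q ∈ finInit n j, A i q ≤ 1 := by
  cases j with
  | zero => simp
  | succ k =>
    rw [show k + 1 = ((⟨k, hj⟩ : Fin n) : ℕ) + 1 from rfl, finInit_succ]
    have := hA.2.1 i ⟨k, hj⟩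
    omega

lemma IsASM.height_succ_left_mem (hA : IsASM A) {i j : ℕ} (hi : i < n) (hj : j ≤ n) :
    height A i j ≤ height A (i + 1) j ∧ height A (i + 1) j ≤ height A i j + 1 := by
  have := hA.sum_finInit_row_mem ⟨i, hi⟩ hj
  rw [height_succ_left A hi]
  omega

lemma IsASM.height_last_right (hA : IsASM A) {i : ℕ} (hi : i ≤ n) : height A i n = i := by
  induction i with
  | zero => simp
  | succ i ih =>
    rw [height_succ_left A hi, ih (by omega), finInit_self, hA.2.2.2.1]
    push_cast; ring

end IsASM

structure IsHeight (n : ℕ) (g : ℕ → ℕ → ℤ) : Prop where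
  zero_left : ∀ j, g 0 j = 0
  zero_right : ∀ i, g i 0 = 0
  last_left : ∀ j ≤ n, g n j = j
  last_right : ∀ i ≤ n, g i n = i
  succ_left : ∀ i < n, ∀ j ≤ n, g i j ≤ g (i + 1) j ∧ g (i + 1) j ≤ g i j + 1
  succ_right : ∀ i ≤ n, ∀ j < n, g i j ≤ g i (j + 1) ∧ g i (j + 1) ≤ g i j + 1

lemma IsASM.isHeight_height {A : Matrix (Fin n) (Fin n) ℤ} (hA : IsASM A) :
    IsHeight n (height A) where
  zero_left := height_zero_left A
  zero_right := height_zero_right A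
  last_left j hj := by simpa [height_transpose] using hA.transpose.height_last_right hj
  last_right _ hi := hA.height_last_right hi
  succ_left _ hi _ hj := hA.height_succ_left_mem hi hj
  succ_right _ hi _ hj := by simpa [height_transpose] using hA.transpose.height_succ_left_mem hj hi

lemma IsHeight.flip {g : ℕ → ℕ → ℤ} (hg : IsHeight n g) : IsHeight n (fun i j => g j i) where
  zero_left := hg.zero_right
  zero_right := hg.zero_left
  last_left := hg.last_right
  last_right := hg.last_left
  succ_left i hi j hj := hg.succ_right j hj i hi
  succ_right i hi j hj := hg.succ_left j hj i hi

def ofHeight (g : ℕ → ℕ → ℤ) : Matrix (Fin n) (Fin n) ℤ :=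
  Matrix.of fun p q => g (p + 1) (q + 1) - g p (q + 1) - g (p + 1) q + g p q

lemma ofHeight_height (A : Matrix (Fin n) (Fin n) ℤ) : ofHeight (height A) = A := by
  ext p q
  simp only [ofHeight, Matrix.of_apply, height_succ_left A p.2, sum_finInit_succ _ q.2]
  ring

lemma ofHeight_congr {g g' : ℕ → ℕ → ℤ} (h : ∀ u ≤ n, ∀ v ≤ n, g u v = g' u v) :
    (ofHeight g : Matrix (Fin n) (Fin n) ℤ) = ofHeight g' := by
  ext p q
  simp only [ofHeight, Matrix.of_apply]
  rw [h p (by omega) q (by omega), h (p + 1) p.2 q (by omega), h p (by omega) (q + 1) q.2,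
    h (p + 1) p.2 (q + 1) q.2]

lemma ofHeight_sub (g g' : ℕ → ℕ → ℤ) :
    (ofHeight (fun u v => g u v - g' u v) : Matrix (Fin n) (Fin n) ℤ) =
      ofHeight g - ofHeight g' := by
  ext p q
  simp only [ofHeight, Matrix.of_apply, Matrix.sub_apply]
  ring

lemma ofHeight_transpose (g : ℕ → ℕ → ℤ) :
    (ofHeight g : Matrix (Fin n) (Fin n) ℤ)ᵀ = ofHeight fun i j => g j i := by
  ext p q
  simp only [ofHeight, Matrix.of_apply, Matrix.transpose_apply]
  ring

lemma sum_finInit_ofHeight {g : ℕ → ℕ → ℤ} (hg : ∀ i, g i 0 = 0) (p : Fin n) {j : ℕ} (hj : j ≤ n) :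
    ∑ q ∈ finInit n j, ofHeight g p q = g (p + 1) j - g p j := by
  have := sum_finInit_sub (fun t => g (p + 1) t - g p t) hj
  simp only [hg, sub_zero] at this
  rw [← this]
  refine sum_congr rfl fun q _ => ?_
  simp only [ofHeight, Matrix.of_apply]
  ring

lemma cornerSum_ofHeight {g : ℕ → ℕ → ℤ} (hg_left : ∀ j, g 0 j = 0) (hg_right : ∀ i, g i 0 = 0)
    (i j : Fin n) : cornerSum (ofHeight g) i j = g (i + 1) (j + 1) := by
  have := sum_finInit_sub (n := n) (fun t => g t (j + 1)) (j := i + 1) (by omega)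
  rw [hg_left, sub_zero] at this
  rw [cornerSum, ← this, ← finInit_succ]
  refine sum_congr rfl fun p _ => ?_
  rw [← finInit_succ, sum_finInit_ofHeight hg_right p (by omega : (j : ℕ) + 1 ≤ n)]

namespace IsHeight

variable {g : ℕ → ℕ → ℤ}

lemma sum_Iic_ofHeight (hg : IsHeight n g) (p q : Fin n) :
    ∑ k ∈ Iic q, ofHeight g p k = 0 ∨ ∑ k ∈ Iic q, ofHeight g p k = 1 := by
  rw [← finInit_succ, sum_finInit_ofHeight hg.zero_right p (by omega : (q : ℕ) + 1 ≤ n)]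
  have := hg.succ_left p p.2 (q + 1) (by omega)
  omega

lemma sum_ofHeight (hg : IsHeight n g) (p : Fin n) : ∑ k, ofHeight g p k = 1 := by
  rw [← finInit_self, sum_finInit_ofHeight hg.zero_right p le_rfl, hg.last_right _ p.2,
    hg.last_right _ p.2.le]
  push_cast; ring

lemma isASM_ofHeight (hg : IsHeight n g) : IsASM (ofHeight g : Matrix (Fin n) (Fin n) ℤ) := by
  have hT (p q : Fin n) : ofHeight g q p = ofHeight (fun i j => g j i) p q := by
    rw [← ofHeight_transpose]; rfl
  refine ⟨fun p q => ?_, hg.sum_Iic_ofHeight, fun p q => ?_, hg.sum_ofHeight, fun q => ?_⟩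
  · have h₁ := hg.succ_left p p.2 (q + 1) (by omega)
    have h₂ := hg.succ_left p p.2 q (by omega)
    simp only [ofHeight, Matrix.of_apply]
    omega
  · simpa only [hT] using hg.flip.sum_Iic_ofHeight q p
  · simpa only [hT] using hg.flip.sum_ofHeight q

end IsHeight

def cornerIndicator (a b u v : ℕ) : ℤ := if u = a + 1 ∧ v = b + 1 then 1 else 0

lemma IsHeight.sub_cornerIndicator {g : ℕ → ℕ → ℤ} (hg : IsHeight n g) {a b : ℕ}
    (ha : a + 1 < n) (hb : b + 1 < n)
    (h_up : g a (b + 1) + 1 = g (a + 1) (b + 1)) (h_left : g (a + 1) b + 1 = g (a + 1) (b + 1))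
    (h_down : g (a + 1 + 1) (b + 1) = g (a + 1) (b + 1))
    (h_right : g (a + 1) (b + 1 + 1) = g (a + 1) (b + 1)) :
    IsHeight n fun u v => g u v - cornerIndicator a b u v where
  zero_left j := by simp [cornerIndicator, hg.zero_left]
  zero_right i := by simp [cornerIndicator, hg.zero_right]
  last_left j hj := by simp [cornerIndicator, hg.last_left j hj, ha.ne']
  last_right i hi := by simp [cornerIndicator, hg.last_right i hi, hb.ne']
  succ_left i hi j hj := by
    have := hg.succ_left i hi j hj
    unfold cornerIndicator
    grind
  succ_right i hi j hj := by
    have := hg.succ_right i hi j hj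
    unfold cornerIndicator
    grind

lemma IsHeight.interior_of_lt {g g' : ℕ → ℕ → ℤ} (hg : IsHeight n g) (hg' : IsHeight n g')
    {u v : ℕ} (hu : u ≤ n) (hv : v ≤ n) (h : g' u v < g u v) : 0 < u ∧ u < n ∧ 0 < v ∧ v < n := by
  refine ⟨Nat.pos_of_ne_zero ?_, lt_of_le_of_ne hu ?_, Nat.pos_of_ne_zero ?_, lt_of_le_of_ne hv ?_⟩
  · rintro rfl; rw [hg.zero_left, hg'.zero_left] at h; exact h.false
  · rintro rfl; rw [hg.last_left v hv, hg'.last_left v hv] at h; exact h.false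
  · rintro rfl; rw [hg.zero_right, hg'.zero_right] at h; exact h.false
  · rintro rfl; rw [hg.last_right u hu, hg'.last_right u hu] at h; exact h.false

lemma IsHeight.exists_sub_cornerIndicator {g g' : ℕ → ℕ → ℤ} (hg : IsHeight n g)
    (hg' : IsHeight n g') (hle : ∀ u ≤ n, ∀ v ≤ n, g' u v ≤ g u v) {u₀ v₀ : ℕ} (hu₀ : u₀ ≤ n)
    (hv₀ : v₀ ≤ n) (hlt : g' u₀ v₀ < g u₀ v₀) :
    ∃ a b, a + 1 < n ∧ b + 1 < n ∧ IsHeight n (fun u v => g u v - cornerIndicator a b u v) ∧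
      ∀ u ≤ n, ∀ v ≤ n, g' u v ≤ g u v - cornerIndicator a b u v := by
  set S := (range (n + 1) ×ˢ range (n + 1)).filter fun x => g' x.1 x.2 < g x.1 x.2
  have mem_S {u v : ℕ} (hu : u ≤ n) (hv : v ≤ n) (h : g' u v < g u v) : (u, v) ∈ S := by
    simp only [S, mem_filter, mem_product, mem_range]
    exact ⟨⟨by omega, by omega⟩, h⟩
  obtain ⟨⟨u, v⟩, hx, hmax⟩ := exists_max_image S
    (fun x => toLex (g x.1 x.2, -((x.1 : ℤ) + x.2))) ⟨_, mem_S hu₀ hv₀ hlt⟩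
  simp only [S, mem_filter, mem_product, mem_range, Nat.lt_add_one_iff] at hx
  obtain ⟨⟨hu, hv⟩, huv⟩ := hx
  have not_above (u' v' : ℕ) (hu' : u' ≤ n) (hv' : v' ≤ n) (h : g' u' v' < g u' v')
      (habove : g u v < g u' v' ∨ g u v = g u' v' ∧ u' + v' < u + v) : False := by
    have := hmax _ (mem_S hu' hv' h)
    simp only [Prod.Lex.toLex_le_toLex] at this
    omega
  obtain ⟨hu0, ha, hv0, hb⟩ := hg.interior_of_lt hg' hu hv huv
  obtain ⟨a, rfl⟩ := Nat.exists_eq_add_one_of_ne_zero hu0.ne'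
  obtain ⟨b, rfl⟩ := Nat.exists_eq_add_one_of_ne_zero hv0.ne'
  refine ⟨a, b, ha, hb, hg.sub_cornerIndicator ha hb ?_ ?_ ?_ ?_, fun u' hu' v' hv' => ?_⟩
  · have := hg.succ_left a (by omega) (b + 1) hv
    have := hg'.succ_left a (by omega) (b + 1) hv
    by_contra
    exact not_above a (b + 1) (by omega) hv (by omega) (by omega)
  · have := hg.succ_right (a + 1) hu b (by omega)
    have := hg'.succ_right (a + 1) hu b (by omega)
    by_contra
    exact not_above (a + 1) b hu (by omega) (by omega) (by omega)
  · have := hg.succ_left (a + 1) ha (b + 1) hv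
    have := hg'.succ_left (a + 1) ha (b + 1) hv
    by_contra
    exact not_above (a + 1 + 1) (b + 1) ha hv (by omega) (by omega)
  · have := hg.succ_right (a + 1) hu (b + 1) hb
    have := hg'.succ_right (a + 1) hu (b + 1) hb
    by_contra
    exact not_above (a + 1) (b + 1 + 1) hu hb (by omega) (by omega)
  · have := hle u' hu' v' hv'
    unfold cornerIndicator
    grind

def exchange (r s : ℕ) : Matrix (Fin n) (Fin n) ℤ := ofHeight (cornerIndicator r s)

lemma cornerSum_exchange (r s : ℕ) (i j : Fin n) :
    cornerSum (exchange r s) i j = if (i : ℕ) = r ∧ (j : ℕ) = s then 1 else 0 := by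
  rw [exchange, cornerSum_ofHeight (by simp [cornerIndicator]) (by simp [cornerIndicator])]
  simp [cornerIndicator]

lemma exchange_apply (r s : ℕ) (p q : Fin n) :
    exchange r s p q =
      if ((p : ℕ) = r ∨ (p : ℕ) = r + 1) ∧ ((q : ℕ) = s ∨ (q : ℕ) = s + 1) then
        if ((p : ℕ) = r ↔ (q : ℕ) = s) then 1 else -1
      else 0 := by
  simp only [exchange, ofHeight, cornerIndicator, Matrix.of_apply]
  split_ifs <;> omega

def IsExchangeAt (A B : Matrix (Fin n) (Fin n) ℤ) (p : Fin n × Fin n) : Prop :=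
  ∃ (hr : (p.1 : ℕ) + 1 < n) (hs : (p.2 : ℕ) + 1 < n),
    B p.1 p.2 - A p.1 p.2 = -1 ∧
    B p.1 ⟨p.2 + 1, hs⟩ - A p.1 ⟨p.2 + 1, hs⟩ = 1 ∧
    B ⟨p.1 + 1, hr⟩ p.2 - A ⟨p.1 + 1, hr⟩ p.2 = 1 ∧
    B ⟨p.1 + 1, hr⟩ ⟨p.2 + 1, hs⟩ - A ⟨p.1 + 1, hr⟩ ⟨p.2 + 1, hs⟩ = -1 ∧
    ∀ p' q' : Fin n,
      ¬ ((p' = p.1 ∨ p' = ⟨p.1 + 1, hr⟩) ∧ (q' = p.2 ∨ q' = ⟨p.2 + 1, hs⟩)) →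
        A p' q' = B p' q'

lemma isExchangeAt_iff (A B : Matrix (Fin n) (Fin n) ℤ) (p : Fin n × Fin n) :
    IsExchangeAt A B p ↔
      (p.1 : ℕ) + 1 < n ∧ (p.2 : ℕ) + 1 < n ∧ A - B = exchange p.1 p.2 := by
  obtain ⟨r, s⟩ := p
  dsimp only [IsExchangeAt]
  constructor
  · rintro ⟨hr, hs, h₁, h₂, h₃, h₄, hout⟩
    refine ⟨hr, hs, Matrix.ext fun p q => ?_⟩
    rw [Matrix.sub_apply, exchange_apply]
    by_cases hblock : (p = r ∨ p = ⟨r + 1, hr⟩) ∧ (q = s ∨ q = ⟨s + 1, hs⟩)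
    · obtain ⟨rfl | rfl, rfl | rfl⟩ := hblock <;> simp <;> omega
    · rw [hout p q hblock, sub_self, if_neg]
      simpa [Fin.ext_iff] using hblock
  · rintro ⟨hr, hs, h⟩
    have hentry (p q : Fin n) : B p q - A p q = -exchange r s p q := by
      rw [← h, Matrix.sub_apply]; ring
    refine ⟨hr, hs, by simp [hentry, exchange_apply], by simp [hentry, exchange_apply],
      by simp [hentry, exchange_apply], by simp [hentry, exchange_apply], fun p q hout => ?_⟩
    have := hentry p q
    rw [exchange_apply, if_neg (by simpa [Fin.ext_iff] using hout)] at this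
    omega

lemma IsExchangeAt.unique {A B : Matrix (Fin n) (Fin n) ℤ} {p p' : Fin n × Fin n}
    (h : IsExchangeAt A B p) (h' : IsExchangeAt A B p') : p = p' := by
  obtain ⟨-, -, hp⟩ := (isExchangeAt_iff A B p).1 h
  obtain ⟨-, -, hp'⟩ := (isExchangeAt_iff A B p').1 h'
  have := congrArg (fun M => cornerSum M p.1 p.2) (hp.symm.trans hp')
  simp only [cornerSum_exchange, true_and, if_true] at this
  split_ifs at this with hpp'
  · exact Prod.ext (Fin.ext hpp'.1) (Fin.ext hpp'.2)
  · exact absurd this one_ne_zero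

lemma asmCovers_of_cornerSum_sub {A B : Matrix (Fin n) (Fin n) ℤ} (r s : Fin n)
    (h : ∀ i j, cornerSum A i j - cornerSum B i j = if i = r ∧ j = s then 1 else 0) :
    asmCovers A B := by
  refine ⟨⟨fun i j => ?_, fun hle => ?_⟩, ?_⟩
  · have := h i j; split_ifs at this <;> omega
  · have := hle r s; have := h r s; rw [if_pos ⟨rfl, rfl⟩] at this; omega
  rintro C - ⟨hAC, hCA⟩ ⟨hCB, hBC⟩
  simp only [asmLE, not_forall, not_le] at hCA hBC
  obtain ⟨i, j, hij⟩ := hCA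
  obtain ⟨i', j', hij'⟩ := hBC
  -- both strict inequalities can only occur at `(r, s)`, where `A` and `B` differ by one
  have h₁ := h i j; have h₂ := h i' j'; have := hCB i j; have := hAC i' j'
  split_ifs at h₁ h₂ with e₁ e₂ e₂
  · obtain ⟨rfl, rfl⟩ := e₁; obtain ⟨rfl, rfl⟩ := e₂; omega
  all_goals omega

lemma IsASM.exists_sub_eq_exchange {A B : Matrix (Fin n) (Fin n) ℤ} (hA : IsASM A) (hB : IsASM B)
    (hAB : asmCovers A B) : ∃ r s : ℕ, r + 1 < n ∧ s + 1 < n ∧ A - B = exchange r s := by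
  obtain ⟨⟨hle, hnle⟩, hmin⟩ := hAB
  rw [asmLE_iff_height_le] at hle hnle
  push Not at hnle
  obtain ⟨u, hu, v, hv, huv⟩ := hnle
  obtain ⟨a, b, ha, hb, hg, hBg⟩ :=
    hA.isHeight_height.exists_sub_cornerIndicator hB.isHeight_height hle hu hv huv
  set g := fun u v => height A u v - cornerIndicator a b u v
  have hC (i j : Fin n) : cornerSum (ofHeight g) i j = g (i + 1) (j + 1) :=
    cornerSum_ofHeight hg.zero_left hg.zero_right i j
  have hAC : asmLT A (ofHeight g) := by
    refine ⟨fun i j => ?_, fun h => ?_⟩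
    · rw [hC, cornerSum_eq_height]
      simp only [g, cornerIndicator]
      split_ifs <;> omega
    · have := h ⟨a, by omega⟩ ⟨b, by omega⟩
      rw [hC, cornerSum_eq_height] at this
      simp [g, cornerIndicator] at this
  have hBC : asmLE B (ofHeight g) := by
    by_contra h
    refine hmin _ hg.isASM_ofHeight hAC ⟨fun i j => ?_, h⟩
    rw [hC, cornerSum_eq_height]
    exact hBg _ (by omega) _ (by omega)
  have hBg' : ∀ u ≤ n, ∀ v ≤ n, height B u v = g u v :=
    forall_le_of_forall_succ (by simp [hg.zero_left]) (by simp [hg.zero_right]) fun i j =>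
      le_antisymm (hBg _ (by omega) _ (by omega)) (by simpa [hC, cornerSum_eq_height] using hBC i j)
  have hB_eq : B = A - exchange a b := by
    rw [← ofHeight_height B, ofHeight_congr hBg', ofHeight_sub, ofHeight_height]
    rfl
  exact ⟨a, b, ha, hb, by rw [hB_eq, sub_sub_cancel]⟩

theorem asmCovers_iff_exchange {n : ℕ} (A B : Matrix (Fin n) (Fin n) ℤ)
    (hA : IsASM A) (hB : IsASM B) :
    asmCovers A B ↔
      ∃! p : Fin n × Fin n, ∃ (hr : (p.1 : ℕ) + 1 < n) (hs : (p.2 : ℕ) + 1 < n),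
        B p.1 p.2 - A p.1 p.2 = -1 ∧
        B p.1 ⟨p.2 + 1, hs⟩ - A p.1 ⟨p.2 + 1, hs⟩ = 1 ∧
        B ⟨p.1 + 1, hr⟩ p.2 - A ⟨p.1 + 1, hr⟩ p.2 = 1 ∧
        B ⟨p.1 + 1, hr⟩ ⟨p.2 + 1, hs⟩ - A ⟨p.1 + 1, hr⟩ ⟨p.2 + 1, hs⟩ = -1 ∧
        ∀ p' q' : Fin n,
          ¬ ((p' = p.1 ∨ p' = ⟨p.1 + 1, hr⟩) ∧ (q' = p.2 ∨ q' = ⟨p.2 + 1, hs⟩)) →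
            A p' q' = B p' q' := by
  change asmCovers A B ↔ ∃! p, IsExchangeAt A B p
  constructor
  · intro hAB
    obtain ⟨r, s, hr, hs, h⟩ := hA.exists_sub_eq_exchange hB hAB
    have hex : IsExchangeAt A B (⟨r, by omega⟩, ⟨s, by omega⟩) :=
      (isExchangeAt_iff A B _).2 ⟨hr, hs, h⟩
    exact ⟨_, hex, fun p hp => hp.unique hex⟩
  · rintro ⟨p, hp, -⟩
    obtain ⟨-, -, h⟩ := (isExchangeAt_iff A B p).1 hp
    refine asmCovers_of_cornerSum_sub p.1 p.2 fun i j => ?_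
    rw [← cornerSum_sub, h, cornerSum_exchange]
    simp only [Fin.val_inj]
end

section
/- If B covers A in ASM order on 𝒜_n, then I(B) − I(A) ∈ {−1, 0, 1}, where I denotes the inversion number of an ASM. -/
/-- Inversion number of an ASM. -/
def asmInv {n : ℕ} (A : Matrix (Fin n) (Fin n) ℤ) : ℤ :=
  ∑ i : Fin n, ∑ j : Fin n, ∑ k : Fin n, ∑ l : Fin n,
    if i < j ∧ k < l then A j k * A i l else 0


open Finset

section AsmAux

variable {n : ℕ}

/-- Extended corner sum with natural-number cutoffs (avoids Fin boundary cases). -/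
def extCS (A : Matrix (Fin n) (Fin n) ℤ) (p q : ℕ) : ℤ :=
  ∑ x : Fin n, ∑ y : Fin n, if (x : ℕ) < p ∧ (y : ℕ) < q then A x y else 0

def rowPS (A : Matrix (Fin n) (Fin n) ℤ) (x : Fin n) (q : ℕ) : ℤ :=
  ∑ y : Fin n, if (y : ℕ) < q then A x y else 0

def colPS (A : Matrix (Fin n) (Fin n) ℤ) (y : Fin n) (p : ℕ) : ℤ :=
  ∑ x : Fin n, if (x : ℕ) < p then A x y else 0

lemma sumIf_succ (f : Fin n → ℤ) (p : ℕ) (hp : p < n) :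
    (∑ k : Fin n, if (k : ℕ) < p + 1 then f k else 0)
      = (∑ k : Fin n, if (k : ℕ) < p then f k else 0) + f ⟨p, hp⟩ := by
  have h : ∀ k : Fin n, (if (k : ℕ) < p + 1 then f k else 0)
      = (if (k : ℕ) < p then f k else 0) + (if k = ⟨p, hp⟩ then f k else 0) := by
    intro k
    by_cases hk : k = ⟨p, hp⟩
    · subst hk; simp
    · have hkv : (k : ℕ) ≠ p := fun h' => hk (Fin.ext h')
      by_cases h1 : (k : ℕ) < p
      · simp [h1, Nat.lt_succ_of_lt h1, hk]
      · have h2 : ¬ (k : ℕ) < p + 1 := by omega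
        simp [h1, h2, hk]
  rw [Finset.sum_congr rfl fun k _ => h k, Finset.sum_add_distrib,
    Finset.sum_ite_eq' Finset.univ (⟨p, hp⟩ : Fin n) f]
  simp

lemma sumIf_ge (f : Fin n → ℤ) (p : ℕ) (hp : n ≤ p) :
    (∑ k : Fin n, if (k : ℕ) < p then f k else 0) = ∑ k : Fin n, f k := by
  refine Finset.sum_congr rfl fun k _ => ?_
  have : (k : ℕ) < p := lt_of_lt_of_le k.isLt hp
  simp [this]

lemma sumIf_one (p : ℕ) (hp : p ≤ n) :
    (∑ k : Fin n, if (k : ℕ) < p then (1 : ℤ) else 0) = p := by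
  induction p with
  | zero => simp
  | succ m ih =>
    have hm : m < n := by omega
    rw [sumIf_succ (fun _ => (1:ℤ)) m hm, ih (by omega)]
    push_cast; ring

@[simp] lemma extCS_zero_left (A : Matrix (Fin n) (Fin n) ℤ) (q : ℕ) : extCS A 0 q = 0 := by
  simp [extCS]

@[simp] lemma extCS_zero_right (A : Matrix (Fin n) (Fin n) ℤ) (p : ℕ) : extCS A p 0 = 0 := by
  simp [extCS]

lemma extCS_rows (A : Matrix (Fin n) (Fin n) ℤ) (p q : ℕ) :
    extCS A p q = ∑ x : Fin n, if (x : ℕ) < p then rowPS A x q else 0 := by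
  unfold extCS rowPS
  refine Finset.sum_congr rfl fun x _ => ?_
  by_cases hx : (x : ℕ) < p
  · simp [hx]
  · simp [hx]

lemma extCS_cols (A : Matrix (Fin n) (Fin n) ℤ) (p q : ℕ) :
    extCS A p q = ∑ y : Fin n, if (y : ℕ) < q then colPS A y p else 0 := by
  unfold extCS colPS
  rw [Finset.sum_comm]
  refine Finset.sum_congr rfl fun y _ => ?_
  by_cases hy : (y : ℕ) < q
  · simp [hy, and_comm]
  · simp [hy]

lemma extCS_succ_row (A : Matrix (Fin n) (Fin n) ℤ) (p q : ℕ) (hp : p < n) :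
    extCS A (p + 1) q = extCS A p q + rowPS A ⟨p, hp⟩ q := by
  rw [extCS_rows, extCS_rows, sumIf_succ (fun x => rowPS A x q) p hp]

lemma extCS_succ_col (A : Matrix (Fin n) (Fin n) ℤ) (p q : ℕ) (hq : q < n) :
    extCS A p (q + 1) = extCS A p q + colPS A ⟨q, hq⟩ p := by
  rw [extCS_cols, extCS_cols, sumIf_succ (fun y => colPS A y p) q hq]

lemma rowPS_succ (A : Matrix (Fin n) (Fin n) ℤ) (x : Fin n) (q : ℕ) (hq : q < n) :
    rowPS A x (q + 1) = rowPS A x q + A x ⟨q, hq⟩ := by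
  exact sumIf_succ (fun y => A x y) q hq

lemma colPS_succ (A : Matrix (Fin n) (Fin n) ℤ) (y : Fin n) (p : ℕ) (hp : p < n) :
    colPS A y (p + 1) = colPS A y p + A ⟨p, hp⟩ y := by
  exact sumIf_succ (fun x => A x y) p hp

lemma Iic_to_if (g : Fin n → ℤ) (i : Fin n) :
    ∑ p ∈ Finset.Iic i, g p = ∑ p : Fin n, if (p : ℕ) < (i : ℕ) + 1 then g p else 0 := by
  rw [← Finset.sum_filter]
  refine Finset.sum_congr ?_ fun _ _ => rfl
  ext p
  simp only [Finset.mem_filter, Finset.mem_univ, true_and, Finset.mem_Iic, Fin.le_def]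
  omega

lemma rowPS_eq_Iic (A : Matrix (Fin n) (Fin n) ℤ) (x : Fin n) (j : Fin n) :
    rowPS A x ((j : ℕ) + 1) = ∑ k ∈ Finset.Iic j, A x k := by
  rw [Iic_to_if (fun k => A x k) j]; rfl

lemma colPS_eq_Iic (A : Matrix (Fin n) (Fin n) ℤ) (y : Fin n) (i : Fin n) :
    colPS A y ((i : ℕ) + 1) = ∑ k ∈ Finset.Iic i, A k y := by
  rw [Iic_to_if (fun k => A k y) i]; rfl

end AsmAux

section AsmFacts

variable {n : ℕ} {A : Matrix (Fin n) (Fin n) ℤ}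

lemma rowPS_mem (hA : IsASM A) (x : Fin n) (q : ℕ) : rowPS A x q = 0 ∨ rowPS A x q = 1 := by
  match q with
  | 0 => left; simp [rowPS]
  | (m+1) =>
    by_cases hm : m < n
    · have : rowPS A x (m+1) = ∑ k ∈ Finset.Iic (⟨m, hm⟩ : Fin n), A x k := rowPS_eq_Iic A x ⟨m, hm⟩
      rw [this]
      exact hA.2.1 x ⟨m, hm⟩
    · right
      rw [rowPS, sumIf_ge _ _ (by omega)]
      exact hA.2.2.2.1 x

lemma colPS_mem (hA : IsASM A) (y : Fin n) (p : ℕ) : colPS A y p = 0 ∨ colPS A y p = 1 := by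
  match p with
  | 0 => left; simp [colPS]
  | (m+1) =>
    by_cases hm : m < n
    · have : colPS A y (m+1) = ∑ k ∈ Finset.Iic (⟨m, hm⟩ : Fin n), A k y := colPS_eq_Iic A y ⟨m, hm⟩
      rw [this]
      exact hA.2.2.1 ⟨m, hm⟩ y
    · right
      rw [colPS, sumIf_ge _ _ (by omega)]
      exact hA.2.2.2.2 y

lemma extCS_nonneg (hA : IsASM A) (p q : ℕ) : 0 ≤ extCS A p q := by
  rw [extCS_rows]
  refine Finset.sum_nonneg fun x _ => ?_
  rcases rowPS_mem hA x q with h | h <;> split_ifs <;> simp [h]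

lemma extCS_lastcol (hA : IsASM A) (p : ℕ) (hp : p ≤ n) : extCS A p n = p := by
  rw [extCS_rows]
  have h1 : ∀ x : Fin n, rowPS A x n = 1 := fun x => by
    rw [rowPS, sumIf_ge _ _ le_rfl]; exact hA.2.2.2.1 x
  calc (∑ x : Fin n, if (x:ℕ) < p then rowPS A x n else 0)
      = ∑ x : Fin n, if (x:ℕ) < p then (1:ℤ) else 0 :=
        Finset.sum_congr rfl fun x _ => by rw [h1]
    _ = p := sumIf_one p hp

lemma extCS_lastrow (hA : IsASM A) (q : ℕ) (hq : q ≤ n) : extCS A n q = q := by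
  rw [extCS_cols]
  have h1 : ∀ y : Fin n, colPS A y n = 1 := fun y => by
    rw [colPS, sumIf_ge _ _ le_rfl]; exact hA.2.2.2.2 y
  calc (∑ y : Fin n, if (y:ℕ) < q then colPS A y n else 0)
      = ∑ y : Fin n, if (y:ℕ) < q then (1:ℤ) else 0 :=
        Finset.sum_congr rfl fun y _ => by rw [h1]
    _ = q := sumIf_one q hq

lemma cornerSum_eq_ext (A : Matrix (Fin n) (Fin n) ℤ) (i j : Fin n) :
    cornerSum A i j = extCS A ((i:ℕ)+1) ((j:ℕ)+1) := by
  unfold cornerSum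
  rw [Iic_to_if (fun p => ∑ q ∈ Finset.Iic j, A p q) i, extCS_rows]
  refine Finset.sum_congr rfl fun p _ => ?_
  by_cases hp : (p:ℕ) < (i:ℕ)+1
  · simp only [hp, if_true]
    exact (rowPS_eq_Iic A p j).symm
  · simp [hp]

lemma rowPS_eq_ext (X : Matrix (Fin n) (Fin n) ℤ) (x : Fin n) (q : ℕ) :
    rowPS X x q = extCS X ((x:ℕ)+1) q - extCS X (x:ℕ) q := by
  have := extCS_succ_row X (x:ℕ) q x.isLt
  rw [Fin.eta] at this
  linarith

lemma colPS_eq_ext (X : Matrix (Fin n) (Fin n) ℤ) (y : Fin n) (p : ℕ) :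
    colPS X y p = extCS X p ((y:ℕ)+1) - extCS X p (y:ℕ) := by
  have := extCS_succ_col X p (y:ℕ) y.isLt
  rw [Fin.eta] at this
  linarith

lemma entry_eq (X : Matrix (Fin n) (Fin n) ℤ) (x y : Fin n) :
    X x y = extCS X ((x:ℕ)+1) ((y:ℕ)+1) - extCS X (x:ℕ) ((y:ℕ)+1)
      - extCS X ((x:ℕ)+1) (y:ℕ) + extCS X (x:ℕ) (y:ℕ) := by
  have h1 := rowPS_eq_ext X x ((y:ℕ)+1)
  have h2 := rowPS_eq_ext X x (y:ℕ)
  have h3 := rowPS_succ X x (y:ℕ) y.isLt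
  rw [Fin.eta] at h3
  linarith

lemma rowPS_n (X : Matrix (Fin n) (Fin n) ℤ) (x : Fin n) : rowPS X x n = ∑ k, X x k := by
  unfold rowPS
  exact Finset.sum_congr rfl fun k _ => by simp [k.isLt]

lemma colPS_n (X : Matrix (Fin n) (Fin n) ℤ) (y : Fin n) : colPS X y n = ∑ k, X k y := by
  unfold colPS
  exact Finset.sum_congr rfl fun k _ => by simp [k.isLt]

end AsmFacts

section Wmach

variable {n : ℕ}

def cellM (a b : Fin n) (c : ℤ) : Matrix (Fin n) (Fin n) ℤ :=
  fun p q => if p = a ∧ q = b then c else 0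

lemma sum2_single (a b : Fin n) (c : ℤ) (p q : Fin n → Prop)
    [DecidablePred p] [DecidablePred q] :
    (∑ x : Fin n, ∑ y : Fin n, if p x ∧ q y then (if x = a ∧ y = b then c else 0) else 0)
      = if p a ∧ q b then c else 0 := by
  have h1 : ∀ x : Fin n, (∑ y : Fin n, if p x ∧ q y then (if x = a ∧ y = b then c else 0) else 0)
      = if p x ∧ q b then (if x = a then c else 0) else 0 := by
    intro x
    rw [Finset.sum_eq_single b]
    · split_ifs <;> simp_all
    · intro y _ hy; split_ifs <;> simp_all
    · intro hb; exact absurd (Finset.mem_univ b) hb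
  rw [Finset.sum_congr rfl fun x _ => h1 x, Finset.sum_eq_single a]
  · split_ifs <;> simp_all
  · intro x _ hx; split_ifs <;> simp_all
  · intro ha; exact absurd (Finset.mem_univ a) ha

lemma sum2_single_mul (a b : Fin n) (c : ℤ) (g : Fin n → Fin n → ℤ) :
    (∑ x : Fin n, ∑ y : Fin n, (if x = a ∧ y = b then c else 0) * g x y) = c * g a b := by
  have h1 : ∀ x : Fin n, (∑ y : Fin n, (if x = a ∧ y = b then c else 0) * g x y)
      = if x = a then c * g a b else 0 := by
    intro x
    rw [Finset.sum_eq_single b]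
    · split_ifs <;> simp_all
    · intro y _ hy; split_ifs <;> simp_all
    · intro hb; exact absurd (Finset.mem_univ b) hb
  rw [Finset.sum_congr rfl fun x _ => h1 x, Finset.sum_eq_single a]
  · simp
  · intro x _ hx; simp [hx]
  · intro ha; exact absurd (Finset.mem_univ a) ha

lemma extCS_add (X Y : Matrix (Fin n) (Fin n) ℤ) (p q : ℕ) :
    extCS (X + Y) p q = extCS X p q + extCS Y p q := by
  unfold extCS
  rw [← Finset.sum_add_distrib]
  refine Finset.sum_congr rfl fun x _ => ?_
  rw [← Finset.sum_add_distrib]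
  refine Finset.sum_congr rfl fun y _ => ?_
  by_cases h : (x:ℕ) < p ∧ (y:ℕ) < q <;> simp [h, Matrix.add_apply]

lemma extCS_cell (a b : Fin n) (c : ℤ) (p q : ℕ) :
    extCS (cellM a b c) p q = if (a:ℕ) < p ∧ (b:ℕ) < q then c else 0 := by
  unfold extCS cellM
  exact sum2_single a b c (fun x => (x:ℕ) < p) (fun y => (y:ℕ) < q)

def Wr (X : Matrix (Fin n) (Fin n) ℤ) (j k : Fin n) : ℤ :=
  ∑ i : Fin n, ∑ l : Fin n, if i < j ∧ k < l then X i l else 0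

lemma Wr_cell (a b : Fin n) (c : ℤ) (j k : Fin n) :
    Wr (cellM a b c) j k = if a < j ∧ k < b then c else 0 := by
  unfold Wr cellM
  exact sum2_single a b c (fun i => i < j) (fun l => k < l)

lemma Wr_add (X Y : Matrix (Fin n) (Fin n) ℤ) (j k : Fin n) :
    Wr (X + Y) j k = Wr X j k + Wr Y j k := by
  unfold Wr
  rw [← Finset.sum_add_distrib]
  refine Finset.sum_congr rfl fun i _ => ?_
  rw [← Finset.sum_add_distrib]
  refine Finset.sum_congr rfl fun l _ => ?_
  by_cases h : i < j ∧ k < l <;> simp [h, Matrix.add_apply]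

lemma asmInv_eq_W (X : Matrix (Fin n) (Fin n) ℤ) :
    asmInv X = ∑ j : Fin n, ∑ k : Fin n, X j k * Wr X j k := by
  unfold asmInv Wr
  rw [Finset.sum_comm]
  refine Finset.sum_congr rfl fun j _ => ?_
  rw [Finset.sum_comm]
  refine Finset.sum_congr rfl fun k _ => ?_
  simp only [Finset.mul_sum, mul_ite, mul_zero]

lemma asmInv_add (X Y : Matrix (Fin n) (Fin n) ℤ) :
    asmInv (X + Y) = asmInv X + asmInv Y
      + (∑ j : Fin n, ∑ k : Fin n, X j k * Wr Y j k)
      + (∑ j : Fin n, ∑ k : Fin n, Y j k * Wr X j k) := by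
  rw [asmInv_eq_W (X + Y), asmInv_eq_W X, asmInv_eq_W Y]
  have h : ∀ j k : Fin n, (X + Y) j k * Wr (X + Y) j k
      = X j k * Wr X j k + Y j k * Wr Y j k + X j k * Wr Y j k + Y j k * Wr X j k := by
    intro j k; rw [Wr_add, Matrix.add_apply]; ring
  calc (∑ j : Fin n, ∑ k : Fin n, (X + Y) j k * Wr (X + Y) j k)
      = ∑ j : Fin n, ∑ k : Fin n, (X j k * Wr X j k + Y j k * Wr Y j k
          + X j k * Wr Y j k + Y j k * Wr X j k) := by
        exact Finset.sum_congr rfl fun j _ => Finset.sum_congr rfl fun k _ => h j k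
    _ = _ := by simp only [Finset.sum_add_distrib]

lemma Wr_eq {A : Matrix (Fin n) (Fin n) ℤ} (hA : IsASM A) (r c : Fin n) :
    Wr A r c = (r:ℕ) - extCS A (r:ℕ) ((c:ℕ)+1) := by
  unfold Wr
  have h : ∀ i l : Fin n, (if i < r ∧ c < l then A i l else 0)
      = (if (i:ℕ) < (r:ℕ) then A i l else 0)
        - (if (i:ℕ) < (r:ℕ) ∧ (l:ℕ) < (c:ℕ)+1 then A i l else 0) := by
    intro i l
    simp only [Fin.lt_def]
    split_ifs <;> (try ring) <;> (exfalso; omega)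
  rw [Finset.sum_congr rfl fun i _ => Finset.sum_congr rfl fun l _ => h i l]
  simp only [Finset.sum_sub_distrib]
  have h2 : (∑ i : Fin n, ∑ l : Fin n, if (i:ℕ) < (r:ℕ) then A i l else 0) = (r:ℕ) := by
    have h3 : ∀ i : Fin n, (∑ l : Fin n, if (i:ℕ) < (r:ℕ) then A i l else 0)
        = if (i:ℕ) < (r:ℕ) then (1:ℤ) else 0 := by
      intro i
      by_cases hi : (i:ℕ) < (r:ℕ)
      · simp only [hi, if_true]; exact hA.2.2.2.1 i
      · simp [hi]
    rw [Finset.sum_congr rfl fun i _ => h3 i]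
    exact sumIf_one (r:ℕ) (le_of_lt r.isLt)
  rw [h2]
  rfl

lemma regionT {A : Matrix (Fin n) (Fin n) ℤ} (hA : IsASM A) (a b : Fin n) :
    (∑ j : Fin n, ∑ k : Fin n, if a < j ∧ k < b then A j k else 0)
      = (b:ℕ) - extCS A ((a:ℕ)+1) (b:ℕ) := by
  have h : ∀ j k : Fin n, (if a < j ∧ k < b then A j k else 0)
      = (if (k:ℕ) < (b:ℕ) then A j k else 0)
        - (if (j:ℕ) < (a:ℕ)+1 ∧ (k:ℕ) < (b:ℕ) then A j k else 0) := by
    intro j k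
    simp only [Fin.lt_def]
    split_ifs <;> (try ring) <;> (exfalso; omega)
  rw [Finset.sum_congr rfl fun j _ => Finset.sum_congr rfl fun k _ => h j k]
  simp only [Finset.sum_sub_distrib]
  have h2 : (∑ j : Fin n, ∑ k : Fin n, if (k:ℕ) < (b:ℕ) then A j k else 0)
      = extCS A n (b:ℕ) := by
    unfold extCS
    refine Finset.sum_congr rfl fun j _ => Finset.sum_congr rfl fun k _ => ?_
    simp [j.isLt]
  rw [h2, extCS_lastrow hA (b:ℕ) (le_of_lt b.isLt)]
  rfl

end Wmach

section FinalAux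

variable {n : ℕ}

lemma sum2_cellM (a b : Fin n) (c : ℤ) (g : Fin n → Fin n → ℤ) :
    (∑ x : Fin n, ∑ y : Fin n, cellM a b c x y * g x y) = c * g a b := by
  unfold cellM
  exact sum2_single_mul a b c g

lemma regionT_mul {A : Matrix (Fin n) (Fin n) ℤ} (hA : IsASM A) (a b : Fin n) (c : ℤ) :
    (∑ x : Fin n, ∑ y : Fin n, A x y * (if a < x ∧ y < b then c else 0))
      = c * (((b:ℕ):ℤ) - extCS A ((a:ℕ)+1) (b:ℕ)) := by
  have h : ∀ x y : Fin n, A x y * (if a < x ∧ y < b then c else 0)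
      = c * (if a < x ∧ y < b then A x y else 0) := by
    intro x y; split_ifs <;> ring
  rw [Finset.sum_congr rfl fun x _ => Finset.sum_congr rfl fun y _ => h x y]
  simp only [← Finset.mul_sum]
  rw [regionT hA a b]

end FinalAux

theorem asmInv_diff_of_covers {n : ℕ} (A B : Matrix (Fin n) (Fin n) ℤ)
    (hA : IsASM A) (hB : IsASM B) (h : asmCovers A B) :
    asmInv B - asmInv A ∈ ({-1, 0, 1} : Set ℤ) := by
  obtain ⟨⟨hleAB, hnBA⟩, hcov⟩ := h
  obtain ⟨i0, hi0⟩ := not_forall.mp hnBA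
  obtain ⟨j0, hj0⟩ := not_forall.mp hi0
  have hlt0 : cornerSum B i0 j0 < cornerSum A i0 j0 := not_le.mp hj0
  classical
  set S : Finset (Fin n × Fin n) :=
    Finset.univ.filter (fun p => cornerSum B p.1 p.2 < cornerSum A p.1 p.2) with hSdef
  have hS : S.Nonempty := ⟨(i0, j0), by simp [hSdef]; exact hlt0⟩
  obtain ⟨p0, hp0S, hmax⟩ := Finset.exists_max_image S
    (fun p => 2*(n:ℤ)*(cornerSum A p.1 p.2) - ((p.1 : ℕ) : ℤ) - ((p.2 : ℕ) : ℤ)) hS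
  obtain ⟨i, j⟩ := p0
  simp only [hSdef, Finset.mem_filter, Finset.mem_univ, true_and] at hp0S
  have hkey : ∀ a b : Fin n,
      extCS B ((a:ℕ)+1) ((b:ℕ)+1) < extCS A ((a:ℕ)+1) ((b:ℕ)+1) →
      2*(n:ℤ)*(extCS A ((a:ℕ)+1) ((b:ℕ)+1)) - ((a:ℕ):ℤ) - ((b:ℕ):ℤ)
        ≤ 2*(n:ℤ)*(extCS A ((i:ℕ)+1) ((j:ℕ)+1)) - ((i:ℕ):ℤ) - ((j:ℕ):ℤ) := by
    intro a b hab
    have hmem : (a, b) ∈ S := by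
      simp only [hSdef, Finset.mem_filter, Finset.mem_univ, true_and]
      rw [cornerSum_eq_ext, cornerSum_eq_ext]
      exact hab
    have := hmax (a, b) hmem
    simpa only [cornerSum_eq_ext] using this
  rw [cornerSum_eq_ext, cornerSum_eq_ext] at hp0S
  have hle : ∀ p q : ℕ, p ≤ n → q ≤ n → extCS B p q ≤ extCS A p q := by
    intro p q hp hq
    match p, q with
    | 0, q => simp
    | p+1, 0 => simp
    | p+1, q+1 =>
      have h1 := hleAB ⟨p, by omega⟩ ⟨q, by omega⟩
      simpa [cornerSum_eq_ext] using h1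
  have hn1 : (1:ℤ) ≤ (n:ℤ) := by
    have := i.isLt; omega
  -- v is the corner sum value at the selected cell
  set v : ℤ := extCS A ((i:ℕ)+1) ((j:ℕ)+1) with hv
  have hij : extCS B ((i:ℕ)+1) ((j:ℕ)+1) ≤ v - 1 := by omega
  have hBnn : ∀ p q : ℕ, 0 ≤ extCS B p q := extCS_nonneg hB
  -- j+1 < n
  have hj1 : (j:ℕ)+1 < n := by
    by_contra hc
    have hjn : (j:ℕ)+1 = n := by have := j.isLt; omega
    have h1 : extCS A ((i:ℕ)+1) ((j:ℕ)+1) = (i:ℕ)+1 := by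
      rw [hjn]; exact extCS_lastcol hA ((i:ℕ)+1) (by have := i.isLt; omega)
    have h2 : extCS B ((i:ℕ)+1) ((j:ℕ)+1) = (i:ℕ)+1 := by
      rw [hjn]; exact extCS_lastcol hB ((i:ℕ)+1) (by have := i.isLt; omega)
    omega
  have hi1 : (i:ℕ)+1 < n := by
    by_contra hc
    have hin : (i:ℕ)+1 = n := by have := i.isLt; omega
    have h1 : extCS A ((i:ℕ)+1) ((j:ℕ)+1) = (j:ℕ)+1 := by
      rw [hin]; exact extCS_lastrow hA ((j:ℕ)+1) (by omega)
    have h2 : extCS B ((i:ℕ)+1) ((j:ℕ)+1) = (j:ℕ)+1 := by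
      rw [hin]; exact extCS_lastrow hB ((j:ℕ)+1) (by omega)
    omega
  set jp : Fin n := ⟨(j:ℕ)+1, hj1⟩ with hjp
  set ip : Fin n := ⟨(i:ℕ)+1, hi1⟩ with hip
  have hjpv : (jp:ℕ) = (j:ℕ)+1 := rfl
  have hipv : (ip:ℕ) = (i:ℕ)+1 := rfl
  -- F3 : extA (i+1) (j+2) = v
  have hF3 : extCS A ((i:ℕ)+1) ((j:ℕ)+1+1) = v := by
    have hsA := extCS_succ_col A ((i:ℕ)+1) ((j:ℕ)+1) hj1
    rcases colPS_mem hA ⟨(j:ℕ)+1, hj1⟩ ((i:ℕ)+1) with h0 | h1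
    · omega
    · exfalso
      have hsB := extCS_succ_col B ((i:ℕ)+1) ((j:ℕ)+1) hj1
      have hBd : extCS B ((i:ℕ)+1) ((j:ℕ)+1+1) ≤ extCS B ((i:ℕ)+1) ((j:ℕ)+1) + 1 := by
        rcases colPS_mem hB ⟨(j:ℕ)+1, hj1⟩ ((i:ℕ)+1) with hb | hb <;> omega
      have hmem : extCS B ((i:ℕ)+1) ((jp:ℕ)+1) < extCS A ((i:ℕ)+1) ((jp:ℕ)+1) := by
        rw [hjpv]; omega
      have hk := hkey i jp hmem
      rw [hjpv] at hk
      have hv1 : extCS A ((i:ℕ)+1) ((j:ℕ)+1+1) = v + 1 := by omega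
      rw [hv1] at hk
      have hexp : 2*(n:ℤ)*(v+1) = 2*(n:ℤ)*v + 2*(n:ℤ) := by ring
      push_cast at hk
      omega
  -- F4 : extA (i+2) (j+1) = v
  have hF4 : extCS A ((i:ℕ)+1+1) ((j:ℕ)+1) = v := by
    have hsA := extCS_succ_row A ((i:ℕ)+1) ((j:ℕ)+1) hi1
    rcases rowPS_mem hA ⟨(i:ℕ)+1, hi1⟩ ((j:ℕ)+1) with h0 | h1
    · omega
    · exfalso
      have hsB := extCS_succ_row B ((i:ℕ)+1) ((j:ℕ)+1) hi1
      have hBd : extCS B ((i:ℕ)+1+1) ((j:ℕ)+1) ≤ extCS B ((i:ℕ)+1) ((j:ℕ)+1) + 1 := by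
        rcases rowPS_mem hB ⟨(i:ℕ)+1, hi1⟩ ((j:ℕ)+1) with hb | hb <;> omega
      have hmem : extCS B ((ip:ℕ)+1) ((j:ℕ)+1) < extCS A ((ip:ℕ)+1) ((j:ℕ)+1) := by
        rw [hipv]; omega
      have hk := hkey ip j hmem
      rw [hipv] at hk
      have hv1 : extCS A ((i:ℕ)+1+1) ((j:ℕ)+1) = v + 1 := by omega
      rw [hv1] at hk
      have hexp : 2*(n:ℤ)*(v+1) = 2*(n:ℤ)*v + 2*(n:ℤ) := by ring
      push_cast at hk
      omega
  -- F1 : extA (i+1) j = v - 1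
  have hF1 : extCS A ((i:ℕ)+1) (j:ℕ) = v - 1 := by
    have hsA := extCS_succ_col A ((i:ℕ)+1) (j:ℕ) j.isLt
    rw [Fin.eta] at hsA
    rcases colPS_mem hA j ((i:ℕ)+1) with h0 | h1
    · exfalso
      rcases Nat.eq_zero_or_pos (j:ℕ) with hj0 | hjpos
      · have hz : extCS A ((i:ℕ)+1) (j:ℕ) = 0 := by rw [hj0]; simp
        have := hBnn ((i:ℕ)+1) ((j:ℕ)+1)
        omega
      · have hjj1 : (j:ℕ)-1 < n := by have := j.isLt; omega
        set jm : Fin n := ⟨(j:ℕ)-1, hjj1⟩ with hjm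
        have hjmv : (jm:ℕ)+1 = (j:ℕ) := by simp [hjm]; omega
        have hsB := extCS_succ_col B ((i:ℕ)+1) (j:ℕ) j.isLt
        rw [Fin.eta] at hsB
        have hBmono : extCS B ((i:ℕ)+1) (j:ℕ) ≤ extCS B ((i:ℕ)+1) ((j:ℕ)+1) := by
          rcases colPS_mem hB j ((i:ℕ)+1) with hb | hb <;> omega
        have hmem : extCS B ((i:ℕ)+1) ((jm:ℕ)+1) < extCS A ((i:ℕ)+1) ((jm:ℕ)+1) := by
          rw [hjmv]; omega
        have hk := hkey i jm hmem
        rw [hjmv] at hk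
        have hva : extCS A ((i:ℕ)+1) (j:ℕ) = v := by omega
        rw [hva] at hk
        have hjc : ((jm:ℕ):ℤ) = ((j:ℕ):ℤ) - 1 := by
          have : (jm:ℕ) = (j:ℕ) - 1 := rfl
          omega
        omega
    · omega
  -- F2 : extA i (j+1) = v - 1
  have hF2 : extCS A (i:ℕ) ((j:ℕ)+1) = v - 1 := by
    have hsA := extCS_succ_row A (i:ℕ) ((j:ℕ)+1) i.isLt
    rw [Fin.eta] at hsA
    rcases rowPS_mem hA i ((j:ℕ)+1) with h0 | h1
    · exfalso
      rcases Nat.eq_zero_or_pos (i:ℕ) with hi0 | hipos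
      · have hz : extCS A (i:ℕ) ((j:ℕ)+1) = 0 := by rw [hi0]; simp
        have := hBnn ((i:ℕ)+1) ((j:ℕ)+1)
        omega
      · have hii1 : (i:ℕ)-1 < n := by have := i.isLt; omega
        set im : Fin n := ⟨(i:ℕ)-1, hii1⟩ with him
        have himv : (im:ℕ)+1 = (i:ℕ) := by simp [him]; omega
        have hsB := extCS_succ_row B (i:ℕ) ((j:ℕ)+1) i.isLt
        rw [Fin.eta] at hsB
        have hBmono : extCS B (i:ℕ) ((j:ℕ)+1) ≤ extCS B ((i:ℕ)+1) ((j:ℕ)+1) := by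
          rcases rowPS_mem hB i ((j:ℕ)+1) with hb | hb <;> omega
        have hmem : extCS B ((im:ℕ)+1) ((j:ℕ)+1) < extCS A ((im:ℕ)+1) ((j:ℕ)+1) := by
          rw [himv]; omega
        have hk := hkey im j hmem
        rw [himv] at hk
        have hva : extCS A (i:ℕ) ((j:ℕ)+1) = v := by omega
        rw [hva] at hk
        have hic : ((im:ℕ):ℤ) = ((i:ℕ):ℤ) - 1 := by
          have : (im:ℕ) = (i:ℕ) - 1 := rfl
          omega
        omega
    · omega
  
  -- the perturbation matrix
  set P : Matrix (Fin n) (Fin n) ℤ :=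
    cellM i j (-1) + cellM i jp 1 + cellM ip j 1 + cellM ip jp (-1) with hPdef
  have hPe : ∀ p q : ℕ, extCS P p q
      = if p = (i:ℕ)+1 ∧ q = (j:ℕ)+1 then -1 else 0 := by
    intro p q
    rw [hPdef, extCS_add, extCS_add, extCS_add, extCS_cell, extCS_cell, extCS_cell, extCS_cell,
      hipv, hjpv]
    split_ifs <;> omega
  have hCe : ∀ p q : ℕ, extCS (A + P) p q
      = extCS A p q + (if p = (i:ℕ)+1 ∧ q = (j:ℕ)+1 then -1 else 0) := by
    intro p q
    rw [extCS_add, hPe]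
  have hiip : i ≠ ip := by
    intro hc
    have := congrArg Fin.val hc
    rw [hipv] at this
    omega
  have hjjp : j ≠ jp := by
    intro hc
    have := congrArg Fin.val hc
    rw [hjpv] at this
    omega
  have hPxy : ∀ x y : Fin n, (A + P) x y = A x y
      + (if x = i ∧ y = j then (-1:ℤ) else 0) + (if x = i ∧ y = jp then 1 else 0)
      + (if x = ip ∧ y = j then 1 else 0) + (if x = ip ∧ y = jp then -1 else 0) := by
    intro x y
    rw [hPdef]
    simp only [Matrix.add_apply, cellM]
    ring
  -- entries of A at the four cells
  have haij : A i j = 0 ∨ A i j = 1 := by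
    have e := entry_eq A i j
    have d := colPS_eq_ext A j (i:ℕ)
    have dm := colPS_mem hA j (i:ℕ)
    omega
  have haijp : A i jp = -1 ∨ A i jp = 0 := by
    have e := entry_eq A i jp
    rw [hjpv] at e
    have d := colPS_eq_ext A jp (i:ℕ)
    rw [hjpv] at d
    have dm := colPS_mem hA jp (i:ℕ)
    omega
  have haipj : A ip j = -1 ∨ A ip j = 0 := by
    have e := entry_eq A ip j
    rw [hipv] at e
    have d := rowPS_eq_ext A ip (j:ℕ)
    rw [hipv] at d
    have dm := rowPS_mem hA ip (j:ℕ)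
    omega
  have haipjp : A ip jp = 0 ∨ A ip jp = 1 := by
    have e := entry_eq A ip jp
    rw [hipv, hjpv] at e
    have d := colPS_eq_ext A jp ((i:ℕ)+1+1)
    rw [hjpv] at d
    have dm := colPS_mem hA jp ((i:ℕ)+1+1)
    omega
  have hC : IsASM (A + P) := by
    refine ⟨?_, ?_, ?_, ?_, ?_⟩
    · intro x y
      rw [hPxy]
      rcases eq_or_ne x i with hxi | hxi
      · rcases eq_or_ne y j with hyj | hyj
        · rw [hxi, hyj]
          simp [hiip, hjjp]
          rcases haij with hh | hh <;> omega
        · rcases eq_or_ne y jp with hyjp | hyjp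
          · rw [hxi, hyjp]
            simp [hiip, Ne.symm hjjp]
            rcases haijp with hh | hh <;> omega
          · simp [hyj, hyjp]
            exact hA.1 x y
      · rcases eq_or_ne x ip with hxip | hxip
        · rcases eq_or_ne y j with hyj | hyj
          · rw [hxip, hyj]
            simp [Ne.symm hiip, hjjp]
            rcases haipj with hh | hh <;> omega
          · rcases eq_or_ne y jp with hyjp | hyjp
            · rw [hxip, hyjp]
              simp [Ne.symm hiip, Ne.symm hjjp]
              rcases haipjp with hh | hh <;> omega
            · simp [hyj, hyjp]
              exact hA.1 x y
        · simp [hxi, hxip]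
          exact hA.1 x y
    · -- row partial sums
      intro x jj
      rw [← rowPS_eq_Iic (A + P) x jj]
      have h1 : rowPS (A+P) x ((jj:ℕ)+1)
          = rowPS A x ((jj:ℕ)+1)
            + (if (x:ℕ)+1 = (i:ℕ)+1 ∧ (jj:ℕ)+1 = (j:ℕ)+1 then (-1:ℤ) else 0)
            - (if (x:ℕ) = (i:ℕ)+1 ∧ (jj:ℕ)+1 = (j:ℕ)+1 then (-1:ℤ) else 0) := by
        rw [rowPS_eq_ext, rowPS_eq_ext, hCe, hCe]; ring
      by_cases hc1 : (x:ℕ) = (i:ℕ) ∧ (jj:ℕ) = (j:ℕ)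
      · have hx : x = i := Fin.ext hc1.1
        have hj' : jj = j := Fin.ext hc1.2
        rw [hx, hj'] at h1 ⊢
        have h2 := rowPS_eq_ext A i ((j:ℕ)+1)
        rw [h1]
        split_ifs <;> omega
      · by_cases hc2 : (x:ℕ) = (i:ℕ)+1 ∧ (jj:ℕ) = (j:ℕ)
        · have hx : x = ip := Fin.ext hc2.1
          have hj' : jj = j := Fin.ext hc2.2
          rw [hx, hj'] at h1 ⊢
          have h2 := rowPS_eq_ext A ip ((j:ℕ)+1)
          rw [hipv] at h2
          rw [h1]
          split_ifs <;> omega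
        · rcases rowPS_mem hA x ((jj:ℕ)+1) with hm | hm <;>
            (rw [h1]; split_ifs <;> omega)
    · -- column partial sums
      intro ii y
      rw [← colPS_eq_Iic (A + P) y ii]
      have h1 : colPS (A+P) y ((ii:ℕ)+1)
          = colPS A y ((ii:ℕ)+1)
            + (if (ii:ℕ)+1 = (i:ℕ)+1 ∧ (y:ℕ)+1 = (j:ℕ)+1 then (-1:ℤ) else 0)
            - (if (ii:ℕ)+1 = (i:ℕ)+1 ∧ (y:ℕ) = (j:ℕ)+1 then (-1:ℤ) else 0) := by
        rw [colPS_eq_ext, colPS_eq_ext, hCe, hCe]; ring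
      by_cases hc1 : (ii:ℕ) = (i:ℕ) ∧ (y:ℕ) = (j:ℕ)
      · have hx : ii = i := Fin.ext hc1.1
        have hy : y = j := Fin.ext hc1.2
        rw [hx, hy] at h1 ⊢
        have h2 := colPS_eq_ext A j ((i:ℕ)+1)
        rw [h1]
        split_ifs <;> omega
      · by_cases hc2 : (ii:ℕ) = (i:ℕ) ∧ (y:ℕ) = (j:ℕ)+1
        · have hx : ii = i := Fin.ext hc2.1
          have hy : y = jp := Fin.ext hc2.2
          rw [hx, hy] at h1 ⊢
          have h2 := colPS_eq_ext A jp ((i:ℕ)+1)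
          rw [hjpv] at h2
          rw [h1]
          split_ifs <;> omega
        · rcases colPS_mem hA y ((ii:ℕ)+1) with hm | hm <;>
            (rw [h1]; split_ifs <;> omega)
    · -- full row sums
      intro x
      rw [← rowPS_n (A+P) x]
      have h1 : rowPS (A+P) x n
          = rowPS A x n
            + (if (x:ℕ)+1 = (i:ℕ)+1 ∧ n = (j:ℕ)+1 then (-1:ℤ) else 0)
            - (if (x:ℕ) = (i:ℕ)+1 ∧ n = (j:ℕ)+1 then (-1:ℤ) else 0) := by
        rw [rowPS_eq_ext, rowPS_eq_ext, hCe, hCe]; ring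
      have h2 : rowPS A x n = 1 := by rw [rowPS_n]; exact hA.2.2.2.1 x
      rw [h1]
      split_ifs <;> omega
    · -- full column sums
      intro y
      rw [← colPS_n (A+P) y]
      have h1 : colPS (A+P) y n
          = colPS A y n
            + (if n = (i:ℕ)+1 ∧ (y:ℕ)+1 = (j:ℕ)+1 then (-1:ℤ) else 0)
            - (if n = (i:ℕ)+1 ∧ (y:ℕ) = (j:ℕ)+1 then (-1:ℤ) else 0) := by
        rw [colPS_eq_ext, colPS_eq_ext, hCe, hCe]; ring
      have h2 : colPS A y n = 1 := by rw [colPS_n]; exact hA.2.2.2.2 y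
      rw [h1]
      split_ifs <;> omega
  -- A < A + P ≤ B in the ASM order, hence B = A + P
  have hltAC : asmLT A (A + P) := by
    constructor
    · intro p q
      rw [cornerSum_eq_ext, cornerSum_eq_ext, hCe]
      split_ifs <;> omega
    · intro hge
      have := hge i j
      rw [cornerSum_eq_ext, cornerSum_eq_ext, hCe] at this
      simp only [and_self, if_true] at this
      omega
  have hnCB := hcov (A + P) hC hltAC
  have hleCB : asmLE (A + P) B := by
    intro p q
    rw [cornerSum_eq_ext, cornerSum_eq_ext, hCe]
    by_cases hpq : (p:ℕ)+1 = (i:ℕ)+1 ∧ (q:ℕ)+1 = (j:ℕ)+1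
    · have hp : p = i := Fin.ext (by omega)
      have hq : q = j := Fin.ext (by omega)
      rw [hp, hq]
      simp only [and_self, if_true]
      omega
    · rw [if_neg hpq]
      have := hle ((p:ℕ)+1) ((q:ℕ)+1) p.isLt q.isLt
      omega
  have hBCle : asmLE B (A + P) := by
    by_contra hc
    exact hnCB ⟨hleCB, hc⟩
  have hexteq : ∀ p q : ℕ, p ≤ n → q ≤ n → extCS B p q = extCS (A + P) p q := by
    intro p q hp hq
    match p, q with
    | 0, q => simp
    | p+1, 0 => simp
    | p+1, q+1 =>
      have h1 := hleCB ⟨p, by omega⟩ ⟨q, by omega⟩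
      have h2 := hBCle ⟨p, by omega⟩ ⟨q, by omega⟩
      simp only [cornerSum_eq_ext] at h1 h2
      omega
  have hBeq : B = A + P := by
    funext x y
    have e1 := entry_eq B x y
    have e2 := entry_eq (A + P) x y
    have q1 := hexteq ((x:ℕ)+1) ((y:ℕ)+1) x.isLt y.isLt
    have q2 := hexteq (x:ℕ) ((y:ℕ)+1) (le_of_lt x.isLt) y.isLt
    have q3 := hexteq ((x:ℕ)+1) (y:ℕ) x.isLt (le_of_lt y.isLt)
    have q4 := hexteq (x:ℕ) (y:ℕ) (le_of_lt x.isLt) (le_of_lt y.isLt)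
    omega
  
  -- final computation
  have hW : ∀ x y : Fin n, Wr P x y
      = (if i < x ∧ y < j then (-1:ℤ) else 0) + (if i < x ∧ y < jp then 1 else 0)
        + (if ip < x ∧ y < j then 1 else 0) + (if ip < x ∧ y < jp then -1 else 0) := by
    intro x y
    rw [hPdef, Wr_add, Wr_add, Wr_add, Wr_cell, Wr_cell, Wr_cell, Wr_cell]
  have hInvP : asmInv P = 1 := by
    rw [asmInv_eq_W]
    have hsplit : (∑ x : Fin n, ∑ y : Fin n, P x y * Wr P x y)
        = (∑ x : Fin n, ∑ y : Fin n, cellM i j (-1) x y * Wr P x y)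
          + (∑ x : Fin n, ∑ y : Fin n, cellM i jp 1 x y * Wr P x y)
          + (∑ x : Fin n, ∑ y : Fin n, cellM ip j 1 x y * Wr P x y)
          + (∑ x : Fin n, ∑ y : Fin n, cellM ip jp (-1) x y * Wr P x y) := by
      simp only [hPdef, Matrix.add_apply, add_mul, Finset.sum_add_distrib]
    rw [hsplit, sum2_cellM, sum2_cellM, sum2_cellM, sum2_cellM,
      hW i j, hW i jp, hW ip j, hW ip jp]
    simp only [Fin.lt_def, hipv, hjpv]
    have e1 : ¬ ((i:ℕ) < (i:ℕ)) := by omega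
    have e2 : ¬ ((i:ℕ)+1 < (i:ℕ)) := by omega
    have e3 : (i:ℕ) < (i:ℕ)+1 := by omega
    have e4 : ¬ ((i:ℕ)+1 < (i:ℕ)+1) := by omega
    have f1 : ¬ ((j:ℕ) < (j:ℕ)) := by omega
    have f2 : ¬ ((j:ℕ)+1 < (j:ℕ)) := by omega
    have f3 : (j:ℕ) < (j:ℕ)+1 := by omega
    have f4 : ¬ ((j:ℕ)+1 < (j:ℕ)+1) := by omega
    simp [e1, e2, e3, e4, f1, f2, f3, f4]
  have hT2 : (∑ x : Fin n, ∑ y : Fin n, P x y * Wr A x y)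
      = v - 1 - extCS A (i:ℕ) ((j:ℕ)+1+1) := by
    have hsplit : (∑ x : Fin n, ∑ y : Fin n, P x y * Wr A x y)
        = (∑ x : Fin n, ∑ y : Fin n, cellM i j (-1) x y * Wr A x y)
          + (∑ x : Fin n, ∑ y : Fin n, cellM i jp 1 x y * Wr A x y)
          + (∑ x : Fin n, ∑ y : Fin n, cellM ip j 1 x y * Wr A x y)
          + (∑ x : Fin n, ∑ y : Fin n, cellM ip jp (-1) x y * Wr A x y) := by
      simp only [hPdef, Matrix.add_apply, add_mul, Finset.sum_add_distrib]
    rw [hsplit, sum2_cellM, sum2_cellM, sum2_cellM, sum2_cellM,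
      Wr_eq hA i j, Wr_eq hA i jp, Wr_eq hA ip j, Wr_eq hA ip jp, hipv, hjpv]
    omega
  have hT1 : (∑ x : Fin n, ∑ y : Fin n, A x y * Wr P x y)
      = v - 1 - extCS A ((i:ℕ)+1+1) (j:ℕ) := by
    rw [Finset.sum_congr rfl fun x _ => Finset.sum_congr rfl fun y _ => by rw [hW x y]]
    simp only [mul_add, Finset.sum_add_distrib]
    rw [regionT_mul hA i j (-1), regionT_mul hA i jp 1, regionT_mul hA ip j 1,
      regionT_mul hA ip jp (-1), hipv, hjpv]
    omega
  have hd2 : extCS A (i:ℕ) ((j:ℕ)+1+1) = extCS A (i:ℕ) ((j:ℕ)+1) + colPS A jp (i:ℕ) :=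
    extCS_succ_col A (i:ℕ) ((j:ℕ)+1) hj1
  have hdm2 := colPS_mem hA jp (i:ℕ)
  have hd1 : extCS A ((i:ℕ)+1+1) (j:ℕ) = extCS A ((i:ℕ)+1) (j:ℕ) + rowPS A ip (j:ℕ) :=
    extCS_succ_row A ((i:ℕ)+1) (j:ℕ) hi1
  have hdm1 := rowPS_mem hA ip (j:ℕ)
  rw [hBeq, asmInv_add]
  simp only [Set.mem_insert_iff, Set.mem_singleton_iff]
  omega
end
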